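/- arXiv:1409.6701 — 8 statements merged into one kernel-verified Lean document; each statement's English description precedes it below -/
import Mathlib

section
/- Let A = {p₁,…,pₙ} and B = {q₁,…,qₙ} be two d-dimensional finite subsets of ℤ^d (n ≥ d+1) having the same volume vector, i.e., for every (d+1)-subset of indices the determinants det(1; p_{i₁},…,p_{i_{d+1}}) and det(1; q_{i₁},…,q_{i_{d+1}}) coincide. Then there is a unique affine map t: ℝ^d → ℝ^d with determinant of its linear part equal to 1 such that t(p_i) = q_i for all i. -/
/-!
Lift each point `x ∈ ℝ^d` to `(1, x) ∈ ℝ^(d+1)`, so that volumes are determinants of lifted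
`(d+1)`-tuples. As the `p k` span affinely, some lifted tuple `p ∘ σ` is a basis, with matrix `M`;
let `N` be the matrix of `q ∘ σ`. By Cramer's rule the coordinates of `(1, p k)` in `M` are ratios
of volumes, hence equal to those of `(1, q k)` in `N`, so `A = N M⁻¹` sends every `(1, p k)` to
`(1, q k)`. Then `A` preserves the first coordinate and induces an affine map of `ℝ^d` whose
linear part has determinant `det A = det N / det M = 1`. Uniqueness holds because an affine map is
determined by its values on an affinely spanning set.
-/

/-- The signed normalized volume of the (d+1) points `p ∘ σ` of `ℤ^d`:
the determinant of the (d+1)×(d+1) matrix whose columns are (1, p (σ j)). -/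
def volDet {d n : ℕ} (p : Fin n → Fin d → ℤ) (σ : Fin (d + 1) → Fin n) : ℤ :=
  Matrix.det (Matrix.of fun i j => (Fin.cons 1 (fun i' => p (σ j) i') : Fin (d + 1) → ℤ) i)

open Matrix

def homogMatrix {R ι : Type*} [Ring R] {d : ℕ} (x : ι → Fin d → R) : Matrix (Fin (d + 1)) ι R :=
  Matrix.of fun i j => (Fin.cons 1 (x j) : Fin (d + 1) → R) i

section homogMatrix

variable {R ι : Type*} {d : ℕ}

theorem cast_volDet [CommRing R] {n : ℕ} (p : Fin n → Fin d → ℤ) (σ : Fin (d + 1) → Fin n) :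
    (volDet p σ : R) = (homogMatrix fun j i => (p (σ j) i : R)).det := by
  rw [volDet, ← eq_intCast (Int.castRingHom R), RingHom.map_det]
  congr 1
  ext i j
  refine Fin.cases ?_ ?_ i <;> simp [homogMatrix]

theorem homogMatrix_comp_perm [Ring R] (x : Fin (d + 1) → Fin d → R)
    (π : Equiv.Perm (Fin (d + 1))) :
    homogMatrix (x ∘ π) = (homogMatrix x).submatrix id π :=
  rfl

theorem det_homogMatrix_comp_eq_of_strictMono [CommRing R] {n : ℕ} {x y : Fin n → Fin d → R}
    (h : ∀ σ : Fin (d + 1) → Fin n, StrictMono σ →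
      (homogMatrix (x ∘ σ)).det = (homogMatrix (y ∘ σ)).det)
    (σ : Fin (d + 1) → Fin n) : (homogMatrix (x ∘ σ)).det = (homogMatrix (y ∘ σ)).det := by
  by_cases hσ : σ.Injective
  · set π := Tuple.sort σ
    have hmono : StrictMono (σ ∘ π) :=
      (Tuple.monotone_sort σ).strictMono_of_injective (hσ.comp π.injective)
    have hperm : ∀ z : Fin n → Fin d → R, (homogMatrix (z ∘ σ)).det =
        (Equiv.Perm.sign π⁻¹ : ℤ) * (homogMatrix (z ∘ (σ ∘ π))).det := by
      intro z
      rw [← det_permute', ← homogMatrix_comp_perm]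
      simp [Function.comp_def]
    rw [hperm x, hperm y, h _ hmono]
  · obtain ⟨i, j, hij, hne⟩ : ∃ i j, σ i = σ j ∧ i ≠ j := by
      simpa [Function.Injective] using hσ
    rw [det_zero_of_column_eq hne, det_zero_of_column_eq hne] <;> simp [homogMatrix, hij]

theorem updateCol_homogMatrix [Ring R] [DecidableEq ι] (x : ι → Fin d → R) (j : ι)
    (y : Fin d → R) :
    (homogMatrix x).updateCol j (Fin.cons 1 y) = homogMatrix (Function.update x j y) := by
  ext i k
  rcases eq_or_ne k j with rfl | hk
  · simp [homogMatrix]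
  · simp [homogMatrix, hk]

theorem span_range_cons_one_eq_top [Ring R] {x : ι → Fin d → R}
    (hx : affineSpan R (Set.range x) = ⊤) :
    Submodule.span R (Set.range fun k => (Fin.cons 1 (x k) : Fin (d + 1) → R)) = ⊤ := by
  set S := Submodule.span R (Set.range fun k => (Fin.cons 1 (x k) : Fin (d + 1) → R))
  have hcons : ∀ v : Fin d → R, (Fin.cons 1 v : Fin (d + 1) → R) ∈ S := by
    intro v
    have hv : v ∈ affineSpan R (Set.range x) := hx ▸ AffineSubspace.mem_top R _ v
    refine affineSpan_induction hv ?_ ?_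
    · rintro _ ⟨k, rfl⟩
      exact Submodule.subset_span ⟨k, rfl⟩
    · intro c u v w hu hv hw
      have hlin : (Fin.cons 1 (c • (u -ᵥ v) +ᵥ w) : Fin (d + 1) → R) =
          c • ((Fin.cons 1 u : Fin (d + 1) → R) - Fin.cons 1 v) + Fin.cons 1 w := by
        ext i; refine Fin.cases ?_ ?_ i <;> simp
      rw [hlin]
      exact add_mem (S.smul_mem c (sub_mem hu hv)) hw
  refine eq_top_iff.2 fun w _ => ?_
  have hw : w = Fin.cons 1 (Fin.tail w) + (w 0 - 1) • (Fin.cons 1 0 : Fin (d + 1) → R) := by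
    ext i; refine Fin.cases ?_ ?_ i <;> simp [Fin.tail]
  rw [hw]
  exact add_mem (hcons _) (S.smul_mem _ (hcons 0))

theorem exists_isUnit_homogMatrix_comp {K : Type*} [Field K] {x : ι → Fin d → K}
    (hx : affineSpan K (Set.range x) = ⊤) :
    ∃ σ : Fin (d + 1) → ι, IsUnit (homogMatrix (x ∘ σ)) := by
  have hbasis := Submodule.exists_fun_fin_finrank_span_eq K
    (Set.range fun k => (Fin.cons 1 (x k) : Fin (d + 1) → K))
  rw [span_range_cons_one_eq_top hx, finrank_top, Module.finrank_fin_fun] at hbasis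
  obtain ⟨f, hf, -, hli⟩ := hbasis
  choose σ hσ using hf
  have hcol : (homogMatrix (x ∘ σ)).col = f := by
    ext j i
    simp [homogMatrix, ← hσ j]
  exact ⟨σ, linearIndependent_cols_iff_isUnit.1 (hcol ▸ hli)⟩

end homogMatrix

theorem Matrix.mul_inv_mulVec_eq_of_cramer_eq {R m : Type*} [CommRing R] [Fintype m]
    [DecidableEq m]    {M N : Matrix m m R} {b c : m → R} (hM : IsUnit M.det) (hdet : M.det = N.det)
    (h : cramer M b = cramer N c) : (N * M⁻¹) *ᵥ b = c := by
  rw [← mulVec_mulVec, inv_def, smul_mulVec, ← cramer_eq_adjugate_mulVec, h, mulVec_smul,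
    mulVec_cramer, smul_smul, hdet, Ring.inverse_mul_cancel _ (hdet ▸ hM), one_smul]

section affineMapOfHomog

variable {R : Type*} [CommRing R] {d : ℕ}

def affineMapOfHomog (A : Matrix (Fin (d + 1)) (Fin (d + 1)) R) :
    (Fin d → R) →ᵃ[R] (Fin d → R) where
  toFun x := Fin.tail (A *ᵥ Fin.cons 1 x)
  linear := toLin' (A.submatrix Fin.succ Fin.succ)
  map_vadd' x v := by
    ext i
    simp only [Fin.tail, mulVec, dotProduct, vadd_eq_add, Fin.sum_univ_succ, Fin.cons_zero,
      Fin.cons_succ, mul_one, Pi.add_apply, mul_add, Finset.sum_add_distrib, toLin'_apply,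
      Pi.vadd_apply', submatrix_apply]
    ring

theorem affineMapOfHomog_apply_of_mulVec_eq {A : Matrix (Fin (d + 1)) (Fin (d + 1)) R}
    {x y : Fin d → R} (h : A *ᵥ Fin.cons 1 x = Fin.cons 1 y) : affineMapOfHomog A x = y := by
  change Fin.tail (A *ᵥ Fin.cons 1 x) = y
  rw [h, Fin.tail_cons]

theorem det_linear_affineMapOfHomog {A : Matrix (Fin (d + 1)) (Fin (d + 1)) R}
    (hA : A 0 = Pi.single 0 1) : LinearMap.det (affineMapOfHomog A).linear = A.det := by
  rw [det_succ_row_zero, Fin.sum_univ_succ, hA]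
  simp [affineMapOfHomog, LinearMap.det_toLin', Fin.succAbove_zero]

end affineMapOfHomog

theorem exists_affineMap_det_eq_one_of_det_homogMatrix_eq {K ι : Type*} [Field K] {d : ℕ}
    {x y : ι → Fin d → K} (hx : affineSpan K (Set.range x) = ⊤)
    (hvol : ∀ σ : Fin (d + 1) → ι, (homogMatrix (x ∘ σ)).det = (homogMatrix (y ∘ σ)).det) :
    ∃ t : (Fin d → K) →ᵃ[K] (Fin d → K), LinearMap.det t.linear = 1 ∧ ∀ k, t (x k) = y k := by
  classical
  obtain ⟨σ, hM⟩ := exists_isUnit_homogMatrix_comp hx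
  set M := homogMatrix (x ∘ σ)
  set N := homogMatrix (y ∘ σ)
  have hMdet : IsUnit M.det := (isUnit_iff_isUnit_det M).1 hM
  have hdet : M.det = N.det := hvol σ
  -- Cramer's rule: the coordinates of `(1, x k)` in the basis `M` are volumes, hence equal to
  -- those of `(1, y k)` in `N`.
  have hmap : ∀ k, (N * M⁻¹) *ᵥ Fin.cons 1 (x k) = Fin.cons 1 (y k) := by
    intro k
    refine mul_inv_mulVec_eq_of_cramer_eq hMdet hdet (funext fun j => ?_)
    rw [cramer_apply, cramer_apply, updateCol_homogMatrix, updateCol_homogMatrix,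
      ← Function.comp_update, ← Function.comp_update, hvol]
  have hrow : (N * M⁻¹) 0 = Pi.single 0 1 := by
    have hones : N 0 = M 0 := rfl
    ext j
    rw [mul_apply_eq_vecMul, hones, ← mul_apply_eq_vecMul, mul_nonsing_inv M hMdet,
      one_eq_pi_single]
  refine ⟨affineMapOfHomog (N * M⁻¹), ?_, fun k => affineMapOfHomog_apply_of_mulVec_eq (hmap k)⟩
  rw [det_linear_affineMapOfHomog hrow, det_mul, det_nonsing_inv, ← hdet, mul_comm,
    Ring.inverse_mul_cancel _ hMdet]

theorem unique_affine_map_of_volume_vector_general {d n : ℕ}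
    (p q : Fin n → Fin d → ℤ)
    (hp : affineSpan ℝ (Set.range fun k => fun i => ((p k i : ℝ))) = ⊤)
    (hw : ∀ σ : Fin (d + 1) → Fin n, StrictMono σ → volDet p σ = volDet q σ) :
    ∃! t : (Fin d → ℝ) →ᵃ[ℝ] (Fin d → ℝ),
      LinearMap.det t.linear = 1 ∧
      ∀ k, t (fun i => (p k i : ℝ)) = fun i => (q k i : ℝ) := by
  have hvol := det_homogMatrix_comp_eq_of_strictMono (x := fun k i => (p k i : ℝ))
    (y := fun k i => (q k i : ℝ)) fun σ hσ => by
    rw [Function.comp_def, Function.comp_def, ← cast_volDet, ← cast_volDet, hw σ hσ]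
  obtain ⟨t, ht⟩ := exists_affineMap_det_eq_one_of_det_homogMatrix_eq hp hvol
  refine ⟨t, ht, fun t' ht' => AffineMap.ext_on hp ?_⟩
  rintro _ ⟨k, rfl⟩
  rw [ht'.2, ht.2]

/-- If two d-dimensional configurations of n points in ℤ^d have the same volume
vector, there is a unique affine map with linear part of determinant 1 sending
one to the other (respecting the order of points). -/
theorem unique_affine_map_of_volume_vector {d n : ℕ} (hn : d + 1 ≤ n)
    (p q : Fin n → Fin d → ℤ)
    (hp : affineSpan ℝ (Set.range fun k => fun i => ((p k i : ℝ))) = ⊤)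
    (hq : affineSpan ℝ (Set.range fun k => fun i => ((q k i : ℝ))) = ⊤)
    (hw : ∀ σ : Fin (d + 1) → Fin n, StrictMono σ → volDet p σ = volDet q σ) :
    ∃! t : (Fin d → ℝ) →ᵃ[ℝ] (Fin d → ℝ),
      LinearMap.det t.linear = 1 ∧
      ∀ k, t (fun i => (p k i : ℝ)) = fun i => (q k i : ℝ) :=
  unique_affine_map_of_volume_vector_general p q hp hw
end

section
/- Let A = {p₁,…,pₙ} and B = {q₁,…,qₙ} be two d-dimensional finite subsets of ℤ^d with the same volume vector w, and suppose the gcd of all entries of w equals 1. Then there is an affine unimodular transformation t of ℝ^d with t(ℤ^d) = ℤ^d and t(p_i) = q_i for all i. -/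
/-- The lattice ℤ^d, viewed inside ℝ^d. -/
def intLattice (d : ℕ) : Set (Fin d → ℝ) := {x | ∀ i, ∃ m : ℤ, x i = m}

/-!
Homogenize the points to `(1, p k) ∈ ℤ^(d+1)`: the volume vector becomes the vector of maximal
minors of this family. By Cramer's rule, `det (p ∘ σ) • x` lies in the ℤ-span of the `(1, p (σ j))`
for every `x`, so gcd 1 makes the family span `ℤ^(d+1)`. For `σ` with nonzero minor, the Cramer
coordinates of `(1, p k)` with respect to `p ∘ σ` are again minors, so equal volume vectors
force the families `(1, p k)` and `(1, q k)` to satisfy the same ℤ-linear relations. Hence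
`(1, p k) ↦ (1, q k)` extends to a ℤ-linear endomorphism of `ℤ^(d+1)`; it fixes the first
coordinate and has determinant `det (q ∘ σ) / det (p ∘ σ) = 1`, so it is the homogenization of an
integral affine map `x ↦ A x + c` with `det A = 1`, which maps `ℤ^d` onto itself.
-/

open Matrix Function

section MaxMinor

variable {R ι : Type*} [CommRing R] {m : ℕ}

def maxMinor (v : ι → Fin m → R) (σ : Fin m → ι) : R :=
  (Matrix.of fun i j => v (σ j) i).det

theorem maxMinor_comp_perm (v : ι → Fin m → R) (σ : Fin m → ι) (π : Equiv.Perm (Fin m)) :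
    maxMinor v (σ ∘ π) = Equiv.Perm.sign π * maxMinor v σ :=
  det_permute' π (Matrix.of fun i j => v (σ j) i)

theorem maxMinor_eq_zero_of_not_injective (v : ι → Fin m → R) {σ : Fin m → ι}
    (hσ : ¬Injective σ) : maxMinor v σ = 0 := by
  obtain ⟨i, j, hij, hne⟩ := Function.not_injective_iff.mp hσ
  exact det_zero_of_column_eq hne fun k => by simp [hij]

theorem maxMinor_eq_of_strictMono [LinearOrder ι] {v w : ι → Fin m → R}
    (h : ∀ σ, StrictMono σ → maxMinor v σ = maxMinor w σ) : maxMinor v = maxMinor w := by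
  funext τ
  by_cases hτ : Injective τ
  · set π := Tuple.sort τ
    have hmono : StrictMono (τ ∘ π) :=
      (Tuple.monotone_sort τ).strictMono_of_injective (hτ.comp π.injective)
    have hsort (u : ι → Fin m → R) :
        maxMinor u τ = Equiv.Perm.sign π⁻¹ * maxMinor u (τ ∘ π) := by
      rw [← maxMinor_comp_perm, comp_assoc, ← Equiv.Perm.coe_mul, mul_inv_cancel,
        Equiv.Perm.coe_one, comp_id]
    rw [hsort v, hsort w, h _ hmono]
  · rw [maxMinor_eq_zero_of_not_injective v hτ, maxMinor_eq_zero_of_not_injective w hτ]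

theorem cramer_of_apply_eq_maxMinor_update (v : ι → Fin m → R) (σ : Fin m → ι) (k : ι)
    (j : Fin m) :
    cramer (Matrix.of fun i j => v (σ j) i) (v k) j = maxMinor v (update σ j k) := by
  rw [cramer_apply, maxMinor]
  congr 1
  ext i l
  by_cases h : l = j <;> simp [update, h]

theorem mulVec_of_eq_sum [Fintype ι] (v : ι → Fin m → R) (σ : Fin m → ι) (y : Fin m → R) :
    (Matrix.of fun i j => v (σ j) i) *ᵥ y = ∑ j, y j • v (σ j) := by
  rw [← vecMul_transpose, vecMul_eq_sum]
  rfl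

theorem det_eq_one_of_maxMinor_eq [IsDomain R] {v w : ι → Fin m → R}
    (f : (Fin m → R) →ₗ[R] (Fin m → R)) (hf : ∀ k, f (v k) = w k) {σ : Fin m → ι}
    (h : maxMinor v σ = maxMinor w σ) (hσ : maxMinor v σ ≠ 0) : LinearMap.det f = 1 := by
  have hmul : LinearMap.toMatrix' f * (Matrix.of fun i j => v (σ j) i) =
      Matrix.of fun i j => w (σ j) i := by
    ext i j
    exact congrFun ((LinearMap.toMatrix'_mulVec f (v (σ j))).trans (hf _)) i
  have hdet := congrArg Matrix.det hmul
  rw [det_mul, LinearMap.det_toMatrix'] at hdet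
  exact mul_right_cancel₀ hσ (hdet.trans (h.symm.trans (one_mul _).symm))

variable [Fintype ι]

theorem ker_linearCombination_le_of_maxMinor_eq [IsDomain R] {v w : ι → Fin m → R}
    (h : maxMinor v = maxMinor w) {σ : Fin m → ι} (hσ : maxMinor w σ ≠ 0) :
    LinearMap.ker (Fintype.linearCombination R v) ≤
      LinearMap.ker (Fintype.linearCombination R w) := by
  intro c hc
  rw [LinearMap.mem_ker, Fintype.linearCombination_apply] at hc ⊢
  have hcramer : cramer (Matrix.of fun i j => w (σ j) i) (∑ k, c k • w k) =
      cramer (Matrix.of fun i j => v (σ j) i) 0 := by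
    rw [← hc, map_sum, map_sum]
    refine Finset.sum_congr rfl fun k _ => ?_
    ext j
    simp only [map_smul, Pi.smul_apply, cramer_of_apply_eq_maxMinor_update, h]
  have hdet := mulVec_cramer (Matrix.of fun i j => w (σ j) i) (∑ k, c k • w k)
  rw [hcramer, map_zero, mulVec_zero, eq_comm, smul_eq_zero] at hdet
  exact hdet.resolve_left hσ

theorem span_range_eq_top_of_span_maxMinor_eq_top {v : ι → Fin m → R}
    (h : Ideal.span (Set.range (maxMinor v)) = ⊤) : Submodule.span R (Set.range v) = ⊤ := by
  set S := Submodule.span R (Set.range v)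
  have hcolon : Ideal.span (Set.range (maxMinor v)) ≤ S.colon Set.univ := by
    rw [Ideal.span_le]
    rintro _ ⟨σ, rfl⟩
    rw [SetLike.mem_coe, Submodule.mem_colon]
    intro x _
    rw [maxMinor, ← mulVec_cramer, mulVec_of_eq_sum]
    exact Submodule.sum_mem _ fun j _ => Submodule.smul_mem _ _ (Submodule.subset_span ⟨_, rfl⟩)
  have hone : (1 : R) ∈ S.colon Set.univ := hcolon (h ▸ Submodule.mem_top)
  exact eq_top_iff.mpr fun x _ => by simpa using Submodule.mem_colon.mp hone x trivial

end MaxMinor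

theorem Ideal.span_eq_top_of_forall_dvd_isUnit {R : Type*} [CommRing R] [IsPrincipalIdealRing R]
    {s : Set R} (h : ∀ m, (∀ x ∈ s, m ∣ x) → IsUnit m) : Ideal.span s = ⊤ := by
  rw [← Ideal.span_singleton_generator (Ideal.span s), Ideal.span_singleton_eq_top]
  exact h _ (Submodule.IsPrincipal.dvd_generator_span_iff.mp dvd_rfl)

theorem LinearMap.exists_apply_eq_of_ker_le {R M N ι : Type*} [CommRing R] [AddCommGroup M]
    [Module R M] [AddCommGroup N] [Module R N] [Fintype ι] {v : ι → M} {w : ι → N}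
    (hv : Submodule.span R (Set.range v) = ⊤)
    (hker : ker (Fintype.linearCombination R v) ≤ ker (Fintype.linearCombination R w)) :
    ∃ f : M →ₗ[R] N, ∀ k, f (v k) = w k := by
  classical
  have hsurj := (span_range_eq_top_iff_surjective_fintypeLinearCombination R v).mp hv
  refine ⟨(ker _).liftQ _ hker ∘ₗ ((Fintype.linearCombination R v).quotKerEquivOfSurjective
    hsurj).symm.toLinearMap, fun k => ?_⟩
  rw [← one_smul R (v k), ← Fintype.linearCombination_apply_single R v k 1, LinearMap.comp_apply,
    LinearEquiv.coe_coe, quotKerEquivOfSurjective_symm_apply, Submodule.liftQ_apply,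
    Fintype.linearCombination_apply_single, one_smul]

section Homogenize

variable {R ι : Type*} [CommRing R] {d : ℕ}

def homogenize (p : ι → Fin d → R) (k : ι) : Fin (d + 1) → R :=
  Fin.cons 1 (p k)

theorem apply_zero_eq_of_map_homogenize {p q : ι → Fin d → R}
    {f : (Fin (d + 1) → R) →ₗ[R] (Fin (d + 1) → R)}
    (hspan : Submodule.span R (Set.range (homogenize p)) = ⊤)
    (hf : ∀ k, f (homogenize p k) = homogenize q k) (x : Fin (d + 1) → R) : f x 0 = x 0 := by
  have : LinearMap.proj 0 ∘ₗ f = LinearMap.proj 0 :=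
    LinearMap.ext_on_range hspan fun k => by
      simp only [LinearMap.comp_apply, LinearMap.proj_apply, hf k]
      rfl
  exact LinearMap.congr_fun this x

theorem LinearMap.exists_apply_cons_one_eq (f : (Fin (d + 1) → R) →ₗ[R] (Fin (d + 1) → R))
    (hf : ∀ x, f x 0 = x 0) :
    ∃ (A : Matrix (Fin d) (Fin d) R) (c : Fin d → R),
      A.det = LinearMap.det f ∧ ∀ x, f (Fin.cons 1 x) = Fin.cons 1 (A *ᵥ x + c) := by
  set F := LinearMap.toMatrix' f
  refine ⟨F.submatrix Fin.succ Fin.succ, fun i => F i.succ 0, ?_, fun x => ?_⟩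
  · rw [← LinearMap.det_toMatrix' f, det_succ_row_zero, Fin.sum_univ_succ]
    simp [F, hf]
  · ext i
    refine Fin.cases ?_ (fun i => ?_) i
    · simp only [hf, Fin.cons_zero]
    · rw [← LinearMap.toMatrix'_mulVec]
      simp only [mulVec, dotProduct, Fin.sum_univ_succ, Fin.cons_zero, Fin.cons_succ, mul_one,
        Pi.add_apply, submatrix_apply]
      ring

end Homogenize

section IntAffineMap

variable {d : ℕ}

theorem intLattice_eq_range : intLattice d = Set.range fun (x : Fin d → ℤ) i => (x i : ℝ) := by
  ext y
  simp only [intLattice, Set.mem_ofPred_eq, Set.mem_range, funext_iff]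
  exact ⟨fun h => by choose x hx using h; exact ⟨x, fun i => (hx i).symm⟩,
    fun ⟨x, hx⟩ i => ⟨x i, (hx i).symm⟩⟩

noncomputable def intAffineMap (A : Matrix (Fin d) (Fin d) ℤ) (c : Fin d → ℤ) :
    (Fin d → ℝ) →ᵃ[ℝ] (Fin d → ℝ) :=
  (Matrix.toLin' (A.map (↑))).toAffineMap + AffineMap.const ℝ _ fun i => (c i : ℝ)

variable (A : Matrix (Fin d) (Fin d) ℤ) (c : Fin d → ℤ)

theorem det_intAffineMap_linear : LinearMap.det (intAffineMap A c).linear = A.det := by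
  simp [intAffineMap, Int.cast_det]

theorem intAffineMap_apply_intCast (x : Fin d → ℤ) :
    intAffineMap A c (fun i => (x i : ℝ)) = fun i => ((A *ᵥ x + c) i : ℝ) := by
  ext i
  simp [intAffineMap, mulVec, dotProduct]

theorem image_intAffineMap_intLattice (hA : IsUnit A.det) :
    intAffineMap A c '' intLattice d = intLattice d := by
  have hsurj : Function.Surjective fun x => A *ᵥ x + c := fun y =>
    ⟨A⁻¹ *ᵥ (y - c), by simp [mulVec_mulVec, mul_nonsing_inv A hA]⟩
  rw [intLattice_eq_range, ← Set.range_comp]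
  simp only [Function.comp_def, intAffineMap_apply_intCast]
  exact hsurj.range_comp (fun z i => (z i : ℝ))

end IntAffineMap

theorem volDet_eq_maxMinor_homogenize {d n : ℕ} (p : Fin n → Fin d → ℤ)
    (σ : Fin (d + 1) → Fin n) :
    volDet p σ = maxMinor (homogenize p) σ :=
  rfl

theorem unimodular_equiv_of_volume_vector_gcd_one_general {d n : ℕ}
    (p q : Fin n → Fin d → ℤ)
    (hw : ∀ σ : Fin (d + 1) → Fin n, StrictMono σ → volDet p σ = volDet q σ)
    (hgcd : ∀ m : ℤ, (∀ σ : Fin (d + 1) → Fin n, StrictMono σ → m ∣ volDet p σ) → IsUnit m) :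
    ∃ t : (Fin d → ℝ) →ᵃ[ℝ] (Fin d → ℝ),
      LinearMap.det t.linear = 1 ∧
      t '' intLattice d = intLattice d ∧
      ∀ k, t (fun i => (p k i : ℝ)) = fun i => (q k i : ℝ) := by
  simp only [volDet_eq_maxMinor_homogenize] at hw hgcd
  have hminor := maxMinor_eq_of_strictMono hw
  obtain ⟨σ, -, hσ⟩ : ∃ σ, StrictMono σ ∧ maxMinor (homogenize p) σ ≠ 0 := by
    by_contra! h
    exact not_isUnit_zero (hgcd 0 fun σ hσ => (h σ hσ).symm ▸ dvd_refl 0)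
  have hspan : Submodule.span ℤ (Set.range (homogenize p)) = ⊤ := by
    refine span_range_eq_top_of_span_maxMinor_eq_top (top_unique ?_)
    rw [← Ideal.span_eq_top_of_forall_dvd_isUnit
      (s := maxMinor (homogenize p) '' {σ | StrictMono σ})
      fun m hm => hgcd m fun σ hσ => hm _ ⟨σ, hσ, rfl⟩]
    exact Ideal.span_mono (Set.image_subset_range _ _)
  obtain ⟨f, hf⟩ := LinearMap.exists_apply_eq_of_ker_le hspan
    (ker_linearCombination_le_of_maxMinor_eq hminor (hminor ▸ hσ))
  obtain ⟨A, c, hdet, hAc⟩ := f.exists_apply_cons_one_eq (apply_zero_eq_of_map_homogenize hspan hf)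
  have hA : A.det = 1 := hdet.trans (det_eq_one_of_maxMinor_eq f hf (congrFun hminor σ) hσ)
  refine ⟨intAffineMap A c, by simp [det_intAffineMap_linear, hA],
    image_intAffineMap_intLattice A c (hA ▸ isUnit_one), fun k => ?_⟩
  rw [intAffineMap_apply_intCast, Fin.cons_right_injective 1 ((hAc (p k)).symm.trans (hf k))]

/-- If two d-dimensional configurations of n points in ℤ^d have the same volume
vector, whose entries have gcd equal to 1, then there is an affine unimodular
transformation (an affine map of determinant 1 mapping ℤ^d onto itself)
sending one configuration to the other. -/
theorem unimodular_equiv_of_volume_vector_gcd_one {d n : ℕ} (hn : d + 1 ≤ n)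
    (p q : Fin n → Fin d → ℤ)
    (hp : affineSpan ℝ (Set.range fun k => fun i => ((p k i : ℝ))) = ⊤)
    (hq : affineSpan ℝ (Set.range fun k => fun i => ((q k i : ℝ))) = ⊤)
    (hw : ∀ σ : Fin (d + 1) → Fin n, StrictMono σ → volDet p σ = volDet q σ)
    (hgcd : ∀ m : ℤ, (∀ σ : Fin (d + 1) → Fin n, StrictMono σ → m ∣ volDet p σ) → IsUnit m) :
    ∃ t : (Fin d → ℝ) →ᵃ[ℝ] (Fin d → ℝ),
      LinearMap.det t.linear = 1 ∧
      t '' intLattice d = intLattice d ∧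
      ∀ k, t (fun i => (p k i : ℝ)) = fun i => (q k i : ℝ) :=
  unimodular_equiv_of_volume_vector_gcd_one_general p q hw hgcd
end

section
/- Every lattice tetrahedron in ℤ³ whose only lattice points are its four vertices has lattice width one; that is, there is an affine functional f: ℝ³ → ℝ with f(ℤ³) ⊆ ℤ whose maximum minus minimum over the tetrahedron equals 1. -/
/-- The inclusion of lattice points of ℤ³ into ℝ³. -/
def toR (p : Fin 3 → ℤ) : Fin 3 → ℝ := fun i => (p i : ℝ)

/-- Evaluation of an integer linear functional on a lattice point. -/
def dotZ (f p : Fin 3 → ℤ) : ℤ := ∑ i, f i * p i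

/-!
Put `v 0` at the origin, let `W` be the matrix of edge vectors, `D = |det W|` and
`G = sign (det W) • adj W`, so that `G * W = W * G = D • 1`. Reducing a lattice point `x` modulo
the edge lattice, the residues of `G x` modulo `D`, divided by `D`, become its coordinates in the
edge basis; emptiness therefore says that they sum to more than `D` unless all vanish. Comparing
`x` with `-x`, one vanishing residue forces all to vanish, so the group of residue vectors is
cyclic, of some order `n ∣ D`, and a rescaled generator satisfies the hypothesis `IsTerminal` of
White's terminal lemma. The lemma yields coordinates `i ≠ j` with `D ∣ (G x) i + (G x) j` for all
`x`, and `f = (G i + G j) / D` is an integral functional taking the values `0` and `1` on the edge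
vectors.
-/

open Matrix

namespace Int

theorem emod_add_neg_emod {n : ℤ} (hn : 0 < n) (m : ℤ) :
    m % n + -m % n = if n ∣ m then 0 else n := by
  rw [neg_emod, natAbs_of_nonneg hn.le]
  split_ifs with h
  · simp [emod_eq_zero_of_dvd h]
  · ring

theorem exists_mul_sub_mul_eq_zero_or_one {A : ℤ} (hA : 2 ≤ A) (B : ℤ) :
    ∃ p q : ℤ, 0 < p ∧ p < A ∧ (p * B - q * A = 0 ∨ p * B - q * A = 1) := by
  by_cases hcop : IsCoprime B A
  · obtain ⟨u, w, huw⟩ := hcop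
    have hpq : u % A * B - (-(u / A) * B - w) * A = 1 := by
      rw [emod_def]; linear_combination huw
    refine ⟨u % A, -(u / A) * B - w, ?_, emod_lt_of_pos u (by omega), Or.inr hpq⟩
    refine lt_of_le_of_ne (emod_nonneg u (by omega)) fun h0 => ?_
    rw [← h0, zero_mul, zero_sub] at hpq
    have hA1 := le_of_dvd one_pos (show A ∣ 1 from ⟨-(-(u / A) * B - w), by linarith⟩)
    omega
  · obtain ⟨a, ha⟩ := gcd_dvd_right B A
    obtain ⟨b, hb⟩ := gcd_dvd_left B A
    have hg : 2 ≤ (B.gcd A : ℤ) := by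
      have hg1 : B.gcd A ≠ 1 := mt isCoprime_iff_gcd_eq_one.mpr hcop
      have hg0 : B.gcd A ≠ 0 := fun h => by rw [gcd_eq_zero_iff] at h; omega
      omega
    refine ⟨a, b, by nlinarith, by nlinarith, Or.inl ?_⟩
    rw [ha]; nth_rewrite 1 [hb]; ring

end Int

/-- The residues of `k * A`, `k * B`, `k * C` and `-k` modulo `n` sum to `2 * n` for every
`0 < k < n`. -/
def IsTerminal (n A B C : ℤ) : Prop :=
  ∀ k, 0 < k → k < n → k * A % n + k * B % n + k * C % n = n + k

namespace IsTerminal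

variable {n A B C : ℤ}

theorem swap (h : IsTerminal n A B C) : IsTerminal n B A C :=
  fun k hk hkn => by linarith [h k hk hkn]

theorem rotate (h : IsTerminal n A B C) : IsTerminal n B C A :=
  fun k hk hkn => by linarith [h k hk hkn]

theorem emod (h : IsTerminal n A B C) : IsTerminal n (A % n) (B % n) (C % n) := by
  intro k hk hkn
  simp only [Int.mul_emod k (_ % n), Int.emod_emod, ← Int.mul_emod]
  exact h k hk hkn

/-- Adding the identities at `k` and `n - k`, the residues of `±k * A` contribute `0`, while
those of the other two pairs contribute at most `n` each. -/
theorem not_dvd_mul (h : IsTerminal n A B C) {k : ℤ} (hk : 0 < k) (hkn : k < n) :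
    ¬ n ∣ k * A := by
  intro hdvd
  have hn : 0 < n := hk.trans hkn
  have hneg : ∀ X, (n - k) * X % n = -(k * X) % n := fun X => by
    rw [show (n - k) * X = -(k * X) + n * X by ring, Int.add_mul_emod_self_left]
  have hpair : ∀ X, k * X % n + (n - k) * X % n ≤ n := fun X => by
    rw [hneg, Int.emod_add_neg_emod hn]; split_ifs <;> omega
  have hA : k * A % n + (n - k) * A % n = 0 := by
    rw [hneg, Int.emod_add_neg_emod hn, if_pos hdvd]
  linarith [h k hk hkn, h (n - k) (by omega) (by omega), hpair B, hpair C]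

theorem sum_ediv_eq (h : IsTerminal n A B C) (hsum : A + B + C = n + 1) {k : ℤ} (hk : 0 < k)
    (hkn : k < n) : k * A / n + k * B / n + k * C / n = k - 1 := by
  have hk' := h k hk hkn
  simp only [Int.emod_def] at hk'
  have hzero : n * (k * A / n + k * B / n + k * C / n - (k - 1)) = 0 := by
    linear_combination k * hsum - hk'
  rcases mul_eq_zero.mp hzero with h0 | h0 <;> omega

/-- By `IsTerminal.sum_ediv_eq`, exactly one of `k * A / n`, `k * B / n`, `k * C / n` increases
from `k` to `k + 1`. Near fractions `q / B ≤ p / A` make the first two increase at the same step. -/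
theorem false_of_two_le (h : IsTerminal n A B C) (hC : 2 ≤ C) (hCA : C ≤ A) (hCB : C ≤ B)
    (hsum : A + B + C = n + 1) : False := by
  have hn : 0 < n := by omega
  obtain ⟨p, q, hp, hpA, hpq⟩ := Int.exists_mul_sub_mul_eq_zero_or_one (hC.trans hCA) B
  set k := p * n / A
  have hk : 0 < k := (Int.le_ediv_iff_mul_le (by omega)).mpr (by nlinarith)
  have hkn : k < n := (Int.ediv_lt_iff_lt_mul (by omega)).mpr (by nlinarith)
  have hkA : k * A < p * n := by
    refine lt_of_le_of_ne (Int.ediv_mul_le _ (by omega)) fun heq => h.not_dvd_mul hk hkn ?_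
    exact ⟨p, by rw [heq, mul_comm]⟩
  have hkA' : p * n < (k + 1) * A := Int.lt_ediv_add_one_mul_self _ (by omega)
  have hk1n : k + 1 < n := by nlinarith
  have hkB' : q * n < (k + 1) * B := by
    have hqp : q * A ≤ p * B := by rcases hpq with hpq | hpq <;> linarith
    have hlt : q * n * A < (k + 1) * B * A := by
      nlinarith [mul_le_mul_of_nonneg_right hqp hn.le,
        mul_lt_mul_of_pos_right hkA' (by omega : 0 < B)]
    exact lt_of_mul_lt_mul_right hlt (by omega)
  have hkB : k * B < q * n := by
    by_contra! hle
    set x := k * B - q * n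
    set y := p * n - k * A
    have hxy : x * A + y * B = n * (p * B - q * A) := by ring
    rcases hpq with hpq | hpq
    · nlinarith
    rcases (show x = 0 ∨ x = 1 ∨ 2 ≤ x by omega) with hx | hx | hx
    · refine h.swap.not_dvd_mul (k := y) (by omega) (by nlinarith) ⟨1, ?_⟩
      rw [hx, hpq] at hxy; linarith
    · rcases (show y = 1 ∨ 2 ≤ y by omega) with hy | hy
      · rw [hx, hy, hpq] at hxy; omega
      · nlinarith
    · nlinarith
  have jump : ∀ {X m : ℤ}, k * X < m * n → m * n ≤ (k + 1) * X → k * X / n < (k + 1) * X / n :=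
    fun h1 h2 => ((Int.ediv_lt_iff_lt_mul hn).mpr h1).trans_le ((Int.le_ediv_iff_mul_le hn).mpr h2)
  have hjumpA := jump hkA hkA'.le
  have hjumpB := jump hkB hkB'.le
  have hmonoC : k * C / n ≤ (k + 1) * C / n := Int.ediv_le_ediv hn (by nlinarith)
  have hsum_k := h.sum_ediv_eq hsum hk hkn
  have hsum_k1 := h.sum_ediv_eq hsum (by omega) hk1n
  omega

theorem dvd_sub_one (hn : 0 < n) (h : IsTerminal n A B C) :
    n ∣ A - 1 ∨ n ∣ B - 1 ∨ n ∣ C - 1 := by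
  rcases (show n = 1 ∨ 2 ≤ n by omega) with rfl | hn2
  · simp
  have hres : ∀ X, ¬ n ∣ X → ¬ n ∣ X - 1 → 2 ≤ X % n := fun X h0 h1 => by
    have hX := Int.emod_add_mul_ediv X n
    have hX0 : X % n ≠ 0 := fun h => h0 (Int.dvd_of_emod_eq_zero h)
    have hX1 : X % n ≠ 1 := fun h => h1 ⟨X / n, by linarith⟩
    have hXnn := Int.emod_nonneg X (by omega : n ≠ 0)
    omega
  by_contra! hne
  have hA := hres A (by simpa using h.not_dvd_mul one_pos (by omega)) hne.1
  have hB := hres B (by simpa using h.swap.not_dvd_mul one_pos (by omega)) hne.2.1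
  have hC := hres C (by simpa using h.rotate.rotate.not_dvd_mul one_pos (by omega)) hne.2.2
  have h' := h.emod
  have hsum := h' 1 one_pos (by omega)
  simp only [one_mul, Int.emod_emod] at hsum
  rcases le_total (C % n) (A % n) with hCA | hAC
  · rcases le_total (C % n) (B % n) with hCB | hBC
    · exact h'.false_of_two_le hC hCA hCB hsum
    · exact h'.rotate.rotate.false_of_two_le hB hBC (hBC.trans hCA) (by linarith)
  · rcases le_total (A % n) (B % n) with hAB | hBA
    · exact h'.rotate.false_of_two_le hA hAB hAC (by linarith)
    · exact h'.rotate.rotate.false_of_two_le hB (hBA.trans hAC) hBA (by linarith)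

theorem of_lt_sum_emod {a : Fin 3 → ℤ} (hn : 0 < n) (ha0 : n ∣ a 0 - 1)
    (hdvd : ∀ k, 0 < k → k < n → ∀ i, ¬ n ∣ k * a i)
    (hlow : ∀ k, 0 < k → k < n → n < ∑ i, k * a i % n) :
    IsTerminal n (-a 1) (-a 2) (a 0 + a 1 + a 2) := by
  intro k hk hkn
  have hneg : ∀ i, k * a i % n + -(k * a i) % n = n := fun i => by
    rw [Int.emod_add_neg_emod hn, if_neg (hdvd k hk hkn i)]
  have hcompl : ∀ i, (n - k) * a i % n = -(k * a i) % n := fun i => by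
    rw [show (n - k) * a i = -(k * a i) + n * a i by ring, Int.add_mul_emod_self_left]
  have hup := hlow (n - k) (by omega) (by omega)
  have hlo := hlow k hk hkn
  simp only [Fin.sum_univ_three, hcompl] at hup hlo
  have h0 : k * a 0 % n = k := by
    obtain ⟨c, hc⟩ := ha0
    rw [show k * a 0 = k + n * (k * c) by linear_combination k * hc, Int.add_mul_emod_self_left,
      Int.emod_eq_of_lt hk.le hkn]
  have hsum : k * (a 0 + a 1 + a 2) % n = k * a 0 % n + k * a 1 % n + k * a 2 % n - n := by
    have hq := fun i => Int.emod_add_mul_ediv (k * a i) n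
    rw [show k * (a 0 + a 1 + a 2) = (k * a 0 % n + k * a 1 % n + k * a 2 % n - n) +
        n * (1 + k * a 0 / n + k * a 1 / n + k * a 2 / n) by
          linear_combination -(hq 0) - hq 1 - hq 2,
      Int.add_mul_emod_self_left, Int.emod_eq_of_lt (by omega)]
    linarith [hneg 0, hneg 1, hneg 2]
  rw [mul_neg, mul_neg, hsum]
  linarith [hneg 1, hneg 2]

end IsTerminal

/-- `d` generates the subgroup of `ℤ` spanned by `D` and the values of `ψ`. -/
theorem AddMonoidHom.exists_generator_zmultiples_sup_range {M : Type*} [AddCommGroup M]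
    (ψ : M →+ ℤ) {D : ℤ} (hD : D ≠ 0) :
    ∃ d, 0 < d ∧ d ∣ D ∧ (∀ x, d ∣ ψ x) ∧ ∃ γ, D ∣ ψ γ - d := by
  obtain ⟨a, ha⟩ := Int.subgroup_cyclic (AddSubgroup.zmultiples D ⊔ ψ.range)
  have hmem : ∀ m, m ∈ AddSubgroup.zmultiples D ⊔ ψ.range ↔ |a| ∣ m := fun m => by
    rw [ha, ← AddSubgroup.zmultiples_eq_closure, Int.mem_zmultiples_iff, abs_dvd]
  have hDa : |a| ∣ D := (hmem D).mp (AddSubgroup.mem_sup_left (AddSubgroup.mem_zmultiples D))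
  obtain ⟨_, ⟨c, rfl⟩, _, ⟨γ, rfl⟩, hγ⟩ := AddSubgroup.mem_sup.mp ((hmem |a|).mpr dvd_rfl)
  refine ⟨|a|, abs_pos.mpr fun h => hD ?_, hDa, fun x => (hmem _).mp ?_, γ, ⟨-c, ?_⟩⟩
  · simpa [h] using hDa
  · exact AddSubgroup.mem_sup_right ⟨x, rfl⟩
  · rw [← hγ]; simp only [smul_eq_mul]; ring

/-- With `φ x = G x` for a lattice tetrahedron as in `residuesEmpty_of_empty`, the residues
`φ x i % D`, divided by `D`, are the edge coordinates of a lattice point congruent to `x` modulo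
the edge lattice; when their sum is at most `D`, that point lies in the tetrahedron. -/
def ResiduesEmpty {M : Type*} [AddCommGroup M] (φ : M →+ Fin 3 → ℤ) (D : ℤ) : Prop :=
  ∀ x, ∑ i, φ x i % D ≤ D → ∀ i, D ∣ φ x i

namespace ResiduesEmpty

variable {M : Type*} [AddCommGroup M] {φ : M →+ Fin 3 → ℤ} {D : ℤ}

/-- Otherwise the residue sums of `x` and `-x` both exceed `D`, while together they are at most
`2 * D`, since the residues of `± φ x t` cancel. -/
theorem dvd_of_dvd (hD : 0 < D) (hE : ResiduesEmpty φ D) {x : M} {i : Fin 3}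
    (hi : D ∣ φ x i) (j : Fin 3) : D ∣ φ x j := by
  by_contra hj
  have hx : D < ∑ t, φ x t % D := not_le.mp fun hle => hj (hE x hle j)
  have hnx : D < ∑ t, φ (-x) t % D :=
    not_le.mp fun hle => hj (dvd_neg.mp (by simpa using hE (-x) hle j))
  have hpair : ∀ t, φ x t % D + φ (-x) t % D = if D ∣ φ x t then 0 else D := fun t => by
    simp only [map_neg, Pi.neg_apply, Int.emod_add_neg_emod hD]
  have htot : ∑ t, (φ x t % D + φ (-x) t % D) ≤ 2 * D := by
    simp only [hpair, Fin.sum_univ_three]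
    fin_cases i <;> simp only [Fin.zero_eta, Fin.mk_one, Fin.reduceFinMk] at hi ⊢ <;>
      split_ifs <;> omega
  rw [Finset.sum_add_distrib] at htot
  omega

theorem exists_generator (hD : 0 < D) (hE : ResiduesEmpty φ D) :
    ∃ (γ : M) (d n : ℤ) (a : Fin 3 → ℤ), 0 < d ∧ 0 < n ∧ d * n = D ∧ n ∣ a 0 - 1 ∧
      (∀ i, φ γ i = d * a i) ∧ ∀ x, ∃ k : ℤ, ∀ i, D ∣ φ x i - k * φ γ i := by
  obtain ⟨d, hd, ⟨n, hdn⟩, hdvd, γ, c, hγ⟩ :=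
    ((Pi.evalAddMonoidHom (fun _ => ℤ) 0).comp φ).exists_generator_zmultiples_sup_range hD.ne'
  simp only [AddMonoidHom.coe_comp, Function.comp_apply, Pi.evalAddMonoidHom_apply] at hγ hdvd
  have hn : 0 < n := pos_of_mul_pos_right (hdn ▸ hD) hd.le
  have hsmul : ∀ (k : ℤ) i, φ (k • γ) i = k * φ γ i := by simp
  have hγd : ∀ i, d ∣ φ γ i := fun i => by
    have h0 : D ∣ φ (n • γ) 0 := ⟨1 + n * c, by rw [hsmul]; linear_combination n * hγ - hdn⟩
    have hi := hE.dvd_of_dvd hD h0 i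
    rw [hsmul, hdn, mul_comm d n] at hi
    exact (mul_dvd_mul_iff_left hn.ne').mp hi
  choose a ha using hγd
  refine ⟨γ, d, n, a, hd, hn, hdn.symm, ⟨c, mul_left_cancel₀ hd.ne' ?_⟩, ha, fun x => ?_⟩
  · linear_combination hγ - ha 0 + c * hdn
  obtain ⟨k, hk⟩ := hdvd x
  have h0 : D ∣ φ (x - k • γ) 0 :=
    ⟨-k * c, by simp only [map_sub, Pi.sub_apply, hsmul]; linear_combination hk - k * hγ⟩
  refine ⟨k, fun i => ?_⟩
  simpa [hsmul] using hE.dvd_of_dvd hD h0 i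

theorem exists_pair (hD : 0 < D) (hE : ResiduesEmpty φ D) :
    ∃ i j, i ≠ j ∧ ∀ x, D ∣ φ x i + φ x j := by
  obtain ⟨γ, d, n, a, hd, hn, rfl, ha0, hγ, hgen⟩ := hE.exists_generator hD
  have hdvd_iff : ∀ (k : ℤ) i, d * n ∣ φ (k • γ) i ↔ n ∣ k * a i := fun k i => by
    rw [map_zsmul, Pi.smul_apply, hγ, smul_eq_mul, mul_left_comm, mul_dvd_mul_iff_left hd.ne']
  have hnd : ∀ k, 0 < k → k < n → ∀ i, ¬ n ∣ k * a i := fun k hk hkn i h => by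
    have h0 := (hdvd_iff k 0).mp (hE.dvd_of_dvd hD ((hdvd_iff k i).mpr h) 0)
    have hnk : n ∣ k := by simpa [mul_sub] using dvd_sub h0 (ha0.mul_left k)
    exact absurd (Int.le_of_dvd hk hnk) (by omega)
  have hlow : ∀ k, 0 < k → k < n → n < ∑ i, k * a i % n := fun k hk hkn => by
    by_contra! hle
    refine hnd k hk hkn 0 ((hdvd_iff k 0).mp (hE (k • γ) ?_ 0))
    simp only [map_zsmul, Pi.smul_apply, hγ, smul_eq_mul, mul_left_comm k d,
      Int.mul_emod_mul_of_pos _ _ hd, ← Finset.mul_sum]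
    exact mul_le_mul_of_nonneg_left hle hd.le
  have hpair : ∀ i j, n ∣ a i + a j → ∀ x, d * n ∣ φ x i + φ x j := fun i j h x => by
    obtain ⟨k, hk⟩ := hgen x
    have hγij : d * n ∣ k * (φ γ i + φ γ j) := by
      rw [hγ, hγ, show k * (d * a i + d * a j) = d * (k * (a i + a j)) by ring]
      exact mul_dvd_mul_left d (h.mul_left k)
    rw [show φ x i + φ x j = φ x i - k * φ γ i + (φ x j - k * φ γ j) + k * (φ γ i + φ γ j) by
      ring]
    exact dvd_add (dvd_add (hk i) (hk j)) hγij
  rcases (IsTerminal.of_lt_sum_emod hn ha0 hnd hlow).dvd_sub_one hn with h | h | h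
  · exact ⟨0, 1, by decide,
      hpair 0 1 (by rw [show a 0 + a 1 = a 0 - 1 - (-a 1 - 1) by ring]; exact dvd_sub ha0 h)⟩
  · exact ⟨0, 2, by decide,
      hpair 0 2 (by rw [show a 0 + a 2 = a 0 - 1 - (-a 2 - 1) by ring]; exact dvd_sub ha0 h)⟩
  · exact ⟨1, 2, by decide,
      hpair 1 2 (by
        rw [show a 1 + a 2 = a 0 + a 1 + a 2 - 1 - (a 0 - 1) by ring]; exact dvd_sub h ha0)⟩

end ResiduesEmpty

theorem add_sum_smul_sub_mem_convexHull {E : Type*} [AddCommGroup E] [Module ℝ E] {n : ℕ}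
    (P : Fin (n + 1) → E) {c : Fin n → ℝ} (hc : ∀ j, 0 ≤ c j) (hsum : ∑ j, c j ≤ 1) :
    P 0 + ∑ j, c j • (P j.succ - P 0) ∈ convexHull ℝ (Set.range P) := by
  have heq : P 0 + ∑ j, c j • (P j.succ - P 0) =
      ∑ k, (Fin.cons (1 - ∑ j, c j) c : Fin (n + 1) → ℝ) k • P k := by
    simp only [Fin.sum_univ_succ, Fin.cons_zero, Fin.cons_succ, smul_sub, Finset.sum_sub_distrib,
      ← Finset.sum_smul, sub_smul, one_smul]
    abel
  rw [heq]
  refine (convex_convexHull ℝ _).sum_mem (fun k _ => ?_) ?_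
    (fun k _ => subset_convexHull ℝ _ (Set.mem_range_self k))
  · cases k using Fin.cases with
    | zero => simpa using hsum
    | succ j => simpa using hc j
  · simp [Fin.sum_univ_succ]

theorem Matrix.sign_det_smul_adjugate_mul {n : Type*} [Fintype n] [DecidableEq n]
    (A : Matrix n n ℤ) : (A.det.sign • A.adjugate) * A = |A.det| • 1 := by
  rw [Matrix.smul_mul, adjugate_mul, smul_smul, Int.sign_mul_self_eq_abs]

theorem Matrix.mul_sign_det_smul_adjugate {n : Type*} [Fintype n] [DecidableEq n]
    (A : Matrix n n ℤ) : A * (A.det.sign • A.adjugate) = |A.det| • 1 := by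
  rw [Matrix.mul_smul, mul_adjugate, smul_smul, Int.sign_mul_self_eq_abs]

theorem Matrix.exists_vecMul_eq_single_add_single {n : Type*} [Fintype n] [DecidableEq n]
    {G W : Matrix n n ℤ} {D : ℤ} (hD : D ≠ 0) (hGW : G * W = D • 1) {i j : n}
    (hij : ∀ x, D ∣ (G *ᵥ x) i + (G *ᵥ x) j) :
    ∃ f : n → ℤ, f ᵥ* W = Pi.single i 1 + Pi.single j 1 := by
  choose f hf using fun l => by simpa using hij (Pi.single l 1)
  refine ⟨f, smul_right_injective _ hD ?_⟩
  have hDf : D • f = G i + G j := funext fun l => by simpa using (hf l).symm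
  change D • (f ᵥ* W) = D • (Pi.single i 1 + Pi.single j 1)
  rw [← smul_vecMul, hDf, add_vecMul, ← mul_apply_eq_vecMul, ← mul_apply_eq_vecMul, hGW]
  ext l
  simp only [Pi.add_apply, Pi.smul_apply, smul_apply, one_eq_pi_single, smul_eq_mul, mul_add]

section EdgeMatrix

variable {n : ℕ}

def edgeMatrix (v : Fin (n + 1) → Fin n → ℤ) : Matrix (Fin n) (Fin n) ℤ :=
  Matrix.of fun i j => v j.succ i - v 0 i

theorem edgeMatrix_col (v : Fin (n + 1) → Fin n → ℤ) (j : Fin n) :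
    (edgeMatrix v).col j = v j.succ - v 0 :=
  rfl

theorem vecMul_edgeMatrix (v : Fin (n + 1) → Fin n → ℤ) (f : Fin n → ℤ) (j : Fin n) :
    (f ᵥ* edgeMatrix v) j = f ⬝ᵥ v j.succ - f ⬝ᵥ v 0 := by
  rw [vecMul_apply, edgeMatrix_col, dotProduct_sub]

end EdgeMatrix

theorem det_edgeMatrix_ne_zero {v : Fin 4 → Fin 3 → ℤ}
    (hindep : AffineIndependent ℝ fun k => toR (v k)) : (edgeMatrix v).det ≠ 0 := by
  have hli := ((affineIndependent_iff_linearIndependent_vsub ℝ _ 0).mp hindep).comp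
    (fun j : Fin 3 => (⟨j.succ, j.succ_ne_zero⟩ : {k : Fin 4 // k ≠ 0}))
    (fun a b hab => Fin.succ_injective _ (congrArg Subtype.val hab))
  have hcol : ((Int.castRingHom ℝ).mapMatrix (edgeMatrix v)).col =
      fun j : Fin 3 => toR (v j.succ) -ᵥ toR (v 0) := by
    ext j i; simp [edgeMatrix, toR]
  have hunit := linearIndependent_cols_iff_isUnit.mp (by rw [hcol]; exact hli)
  rw [isUnit_iff_isUnit_det, ← RingHom.map_det, isUnit_iff_ne_zero, eq_intCast] at hunit
  exact_mod_cast hunit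

theorem toR_add_mem_convexHull {v : Fin 4 → Fin 3 → ℤ} {D : ℤ} (hD : 0 < D) {y p : Fin 3 → ℤ}
    (hp : ∀ j, 0 ≤ p j) (hsum : ∑ j, p j ≤ D) (hy : D • y = edgeMatrix v *ᵥ p) :
    toR (v 0 + y) ∈ convexHull ℝ (toR '' Set.range v) := by
  have hDR : (0 : ℝ) < D := by exact_mod_cast hD
  have heq : toR (v 0 + y) =
      toR (v 0) + ∑ j, ((p j : ℝ) / D) • (toR (v j.succ) - toR (v 0)) := by
    ext i
    have hyi : (y i : ℝ) * D = ∑ j, p j * ((v j.succ i : ℝ) - v 0 i) := by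
      have hcoord := congrFun hy i
      simp only [Pi.smul_apply, smul_eq_mul, mulVec, dotProduct, edgeMatrix, of_apply] at hcoord
      rw [mul_comm]
      exact_mod_cast hcoord.trans (Finset.sum_congr rfl fun j _ => mul_comm _ _)
    simp only [toR, Pi.add_apply, Finset.sum_apply, Pi.smul_apply, Pi.sub_apply, smul_eq_mul,
      Int.cast_add, div_mul_eq_mul_div, ← Finset.sum_div]
    rw [← hyi, mul_div_cancel_right₀ _ hDR.ne']
  rw [← Set.range_comp, heq]
  refine add_sum_smul_sub_mem_convexHull (toR ∘ v)
    (fun j => div_nonneg (by exact_mod_cast hp j) hDR.le) ?_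
  rw [← Finset.sum_div, div_le_one hDR]
  exact_mod_cast hsum

/-- Reducing `x` modulo the edge lattice to `y` with `G y` the residue vector of `G x`, the point
`v 0 + y` lies in the tetrahedron; it is `v 0` exactly when all residues vanish, and it cannot be
another vertex `v (m + 1)`, whose residue vector has the entry `D`. -/
theorem residuesEmpty_of_empty {v : Fin 4 → Fin 3 → ℤ} {G : Matrix (Fin 3) (Fin 3) ℤ} {D : ℤ}
    (hD : 0 < D) (hGW : G * edgeMatrix v = D • 1) (hWG : edgeMatrix v * G = D • 1)
    (hempty : ∀ z : Fin 3 → ℤ,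
      toR z ∈ convexHull ℝ (toR '' Set.range v) → z ∈ Set.range v) :
    ResiduesEmpty (mulVecLin G).toAddMonoidHom D := by
  intro x hx i
  simp only [LinearMap.toAddMonoidHom_coe, mulVecLin_apply] at hx ⊢
  set p : Fin 3 → ℤ := fun i => (G *ᵥ x) i % D
  set y := x - edgeMatrix v *ᵥ fun i => (G *ᵥ x) i / D
  have hGy : G *ᵥ y = p := by
    ext j
    simp [y, p, mulVec_sub, mulVec_mulVec, hGW, Int.emod_def]
  have hDy : D • y = edgeMatrix v *ᵥ p := by
    rw [← hGy, mulVec_mulVec, hWG, smul_mulVec, one_mulVec]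
  have hp : ∀ j, 0 ≤ p j := fun j => Int.emod_nonneg _ hD.ne'
  obtain ⟨k, hk⟩ := hempty _ (toR_add_mem_convexHull hD hp hx hDy)
  cases k using Fin.cases with
  | zero =>
    have hy : y = 0 := by simpa using hk.symm
    exact Int.dvd_of_emod_eq_zero (by simpa [hy, p] using (congrFun hGy i).symm)
  | succ m =>
    have hy : y = edgeMatrix v *ᵥ Pi.single m 1 := by
      rw [mulVec_single_one, edgeMatrix_col, hk, add_sub_cancel_left]
    have hpm : p m = D := by
      rw [← congrFun hGy m, hy, mulVec_mulVec, hGW, smul_mulVec, one_mulVec]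
      simp
    exact absurd hpm (Int.emod_lt_of_pos _ hD).ne

/-- White's theorem: every empty lattice tetrahedron has lattice width one,
i.e., some non-constant integer affine functional takes exactly the two
consecutive values c and c+1 on its vertices. -/
theorem empty_tetrahedron_width_one (v : Fin 4 → Fin 3 → ℤ)
    (hindep : AffineIndependent ℝ fun k => toR (v k))
    (hempty : ∀ z : Fin 3 → ℤ,
      toR z ∈ convexHull ℝ (toR '' Set.range v) → z ∈ Set.range v) :
    ∃ (f : Fin 3 → ℤ) (c : ℤ), f ≠ 0 ∧
      (∀ k, dotZ f (v k) = c ∨ dotZ f (v k) = c + 1) ∧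
      (∃ k, dotZ f (v k) = c) ∧ (∃ k, dotZ f (v k) = c + 1) := by
  set W := edgeMatrix v
  have hD : 0 < |W.det| := abs_pos.mpr (det_edgeMatrix_ne_zero hindep)
  obtain ⟨i, j, hij, hdvd⟩ := (residuesEmpty_of_empty hD W.sign_det_smul_adjugate_mul
    W.mul_sign_det_smul_adjugate hempty).exists_pair hD
  obtain ⟨f, hf⟩ := exists_vecMul_eq_single_add_single hD.ne' W.sign_det_smul_adjugate_mul hdvd
  have hval : ∀ m, dotZ f (v m.succ) =
      dotZ f (v 0) + (Pi.single i 1 + Pi.single j 1 : Fin 3 → ℤ) m := fun m => by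
    rw [← hf, vecMul_edgeMatrix]
    unfold dotZ dotProduct
    ring
  refine ⟨f, dotZ f (v 0), ?_, fun k => ?_, ⟨0, rfl⟩, ⟨i.succ, by simp [hval, hij]⟩⟩
  · rintro rfl
    simpa [dotZ, hij] using hval i
  · cases k using Fin.cases with
    | zero => exact Or.inl rfl
    | succ m =>
      rw [hval]
      by_cases hmi : m = i <;> by_cases hmj : m = j <;> simp_all
end

section
/- Let P be a lattice d-polytope of width greater than one such that for d affinely-independent-dual functionals f₁,…,f_d (integer affine functionals, i.e., f_i(ℤ^d) ⊆ ℤ, with linearly independent linear parts) and d vertices v₁,…,v_d of P, the functional f_i gives width one to conv((P ∩ ℤ^d) ∖ {v_i}) for each i. Then P contains at most 2^d + d lattice points. -/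
/-- Evaluation of an integer linear functional on a point of ℤ^d. -/
def dotd {d : ℕ} (f p : Fin d → ℤ) : ℤ := ∑ i, f i * p i

/-- If P is a lattice d-polytope of lattice width greater than one, and there are
d integer affine functionals f₁,…,f_d with linearly independent linear parts and
d vertices v₁,…,v_d of P such that f_i gives width one to conv((P ∩ ℤ^d) ∖ {v_i}),
then P has at most 2^d + d lattice points. -/
theorem lattice_points_bound_of_independent_functionals {d : ℕ}
    (A : Finset (Fin d → ℤ))
    (hdim : affineSpan ℝ ((fun p : Fin d → ℤ => fun i => (p i : ℝ)) '' (A : Set (Fin d → ℤ))) = ⊤)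
    (S : Set (Fin d → ℤ))
    (hS : S = {z | (fun i => (z i : ℝ)) ∈ convexHull ℝ
        ((fun p : Fin d → ℤ => fun i => (p i : ℝ)) '' (A : Set (Fin d → ℤ)))})
    (hwidth : ∀ f : Fin d → ℤ, f ≠ 0 →
      ¬ ∃ c : ℤ, ∀ p ∈ S, c ≤ dotd f p ∧ dotd f p ≤ c + 1)
    (f : Fin d → Fin d → ℤ) (hf : LinearIndependent ℤ f)
    (v : Fin d → Fin d → ℤ)
    (hv : ∀ i, (fun j => ((v i j : ℝ))) ∈ Set.extremePoints ℝ
      (convexHull ℝ ((fun p : Fin d → ℤ => fun i => (p i : ℝ)) '' (A : Set (Fin d → ℤ)))))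
    (hone : ∀ i, ∃ c : ℤ, ∀ p ∈ S \ {v i},
      c ≤ dotd (f i) p ∧ dotd (f i) p ≤ c + 1) :
    S.Finite ∧ S.ncard ≤ 2 ^ d + d := by
  classical
  choose c hc using hone
  set φ : (Fin d → ℤ) → (Fin d → ℤ) := fun p i => dotd (f i) p with hφ
  have hinj : Function.Injective φ := by
    set L : (Fin d → ℤ) →ₗ[ℤ] (Fin d → ℚ) :=
      { toFun := fun p j => (p j : ℚ)
        map_add' := by intro x y; funext j; simp
        map_smul' := by intro m x; funext j; simp } with hL
    have hLinj : Function.Injective L := by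
      intro x y h; funext j
      have hj : ((x j : ℚ)) = (y j : ℚ) := congrFun h j
      exact_mod_cast hj
    have h1 : LinearIndependent ℤ (fun i => (fun j => (f i j : ℚ))) := by
      have := hf.map' L (LinearMap.ker_eq_bot.mpr hLinj)
      exact this
    have h2 : LinearIndependent ℚ (fun i => (fun j => (f i j : ℚ))) :=
      (LinearIndependent.iff_fractionRing ℤ ℚ).mp h1
    set Mq : Matrix (Fin d) (Fin d) ℚ := Matrix.of (fun i j => (f i j : ℚ)) with hM
    have hU : IsUnit Mq := Matrix.linearIndependent_rows_iff_isUnit.mp h2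
    have hMinj : Function.Injective Mq.mulVec := Matrix.mulVec_injective_iff_isUnit.mpr hU
    intro p q hpq
    have hcast : Mq.mulVec (fun j => (p j : ℚ)) = Mq.mulVec (fun j => (q j : ℚ)) := by
      funext i
      have h := congrFun hpq i
      simp only [hφ, dotd] at h
      simp only [Matrix.mulVec, dotProduct, hM, Matrix.of_apply]
      push_cast
      exact_mod_cast congrArg (fun z : ℤ => (z : ℚ)) h
    have := hMinj hcast
    funext j
    exact_mod_cast congrFun this j
  set V : Set (Fin d → ℤ) := Set.range v with hV
  set B : Finset (Fin d → ℤ) := Fintype.piFinset (fun i => ({c i, c i + 1} : Finset ℤ)) with hB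
  have hsub : S \ V ⊆ φ ⁻¹' ↑B := by
    intro p hp
    simp only [Set.mem_preimage, Finset.mem_coe, hB, Fintype.mem_piFinset]
    intro i
    have hpS : p ∈ S \ {v i} := ⟨hp.1, fun h => hp.2 ⟨i, (Set.mem_singleton_iff.mp h).symm⟩⟩
    obtain ⟨h1, h2⟩ := hc i p hpS
    have hor : dotd (f i) p = c i ∨ dotd (f i) p = c i + 1 := by omega
    simpa [hφ, Finset.mem_insert, Finset.mem_singleton] using hor
  have hfin1 : (S \ V).Finite :=
    (Set.Finite.preimage hinj.injOn B.finite_toSet).subset hsub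
  have hVfin : V.Finite := Set.finite_range v
  have hcover : S ⊆ (S \ V) ∪ V := by
    intro x hx; by_cases h : x ∈ V
    · exact Or.inr h
    · exact Or.inl ⟨hx, h⟩
  have hSfin : S.Finite := (hfin1.union hVfin).subset hcover
  refine ⟨hSfin, ?_⟩
  have h1 : S.ncard ≤ (S \ V).ncard + V.ncard := by
    calc S.ncard ≤ ((S \ V) ∪ V).ncard :=
          Set.ncard_le_ncard hcover (hfin1.union hVfin)
      _ ≤ _ := Set.ncard_union_le _ _
  have h2 : (S \ V).ncard ≤ 2 ^ d := by
    have himgsub : φ '' (S \ V) ⊆ ↑B := by rintro _ ⟨p, hp, rfl⟩; exact hsub hp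
    calc (S \ V).ncard = (φ '' (S \ V)).ncard := (Set.ncard_image_of_injective _ hinj).symm
      _ ≤ (↑B : Set (Fin d → ℤ)).ncard := Set.ncard_le_ncard himgsub B.finite_toSet
      _ = B.card := Set.ncard_coe_finset B
      _ ≤ 2 ^ d := by
        rw [hB, Fintype.card_piFinset]
        calc ∏ i, ({c i, c i + 1} : Finset ℤ).card ≤ ∏ _i : Fin d, 2 :=
              Finset.prod_le_prod (fun _ _ => Nat.zero_le _)
                (fun i _ => (Finset.card_insert_le _ _).trans (by simp))
          _ = 2 ^ d := by simp
  have h3 : V.ncard ≤ d := by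
    calc V.ncard = (v '' Set.univ).ncard := by rw [Set.image_univ]
      _ ≤ (Set.univ : Set (Fin d)).ncard := Set.ncard_image_le Set.finite_univ
      _ = d := by simp [Set.ncard_univ]
  omega
end

section
/- Let 1 ≤ p ≤ q with gcd(p,q) = 1, and let Λ(p,q) be the lattice generated by ℤ³ together with the point (1/q, −1/q, p/q). Then Λ(p,q) is a lattice containing ℤ³ with index q, the standard tetrahedron T₀ = conv{(0,0,0), (1,0,0), (0,1,0), (0,0,1)} contains no points of Λ(p,q) other than its vertices, and there is a lattice isomorphism Λ(p,q) → ℤ³ sending T₀ to T(p,q) = conv{(0,0,0), (1,0,0), (0,0,1), (p,q,1)}. -/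
/-!
Write `v = (1/q, -1/q, p/q)`, so every point of Λ(p,q) is `z + k • v` with `z ∈ ℤ³`, and it
lies in ℤ³ exactly when `q ∣ k`. This is detected by integrality of the first coordinate, and,
since `gcd(p, q) = 1`, also by integrality of the third. Hence reducing the first coordinate
mod 1 maps Λ(p,q) onto the subgroup of ℝ/ℤ generated by `1/q`, with kernel ℤ³: the index is `q`.

For a point of Λ(p,q) in `T₀`, `x₀ + x₁` is an integer (as `v₀ + v₁ = 0`) in `[0, 1]`; if it is
`0` then `x₀ = 0`, if it is `1` then `x₂ = 0`. Either way the point is in ℤ³, so it is a vertex.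

The linear map `x ↦ (p x₁ + x₂, q x₁, x₀ + x₁)` has an integer matrix and sends `v` to
`(0, -1, 0)`, while its inverse sends `y ∈ ℤ³` to `(y₂, 0, y₀) - y₁ • v ∈ Λ(p,q)`; it maps the
vertices of `T₀` to those of `T(p,q)`.
-/

/-- The lattice ℤ³ as an additive subgroup of ℝ³. -/
def ZL3 : AddSubgroup (Fin 3 → ℝ) :=
  AddSubgroup.closure (Set.range fun z : Fin 3 → ℤ => fun i => (z i : ℝ))

/-- The lattice Λ(p,q) = ℤ·(1/q, −1/q, p/q) + ℤ³. -/
def Lam (p q : ℕ) : AddSubgroup (Fin 3 → ℝ) :=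
  ZL3 ⊔ AddSubgroup.closure {![(1 : ℝ)/q, -(1 : ℝ)/q, (p : ℝ)/q]}

noncomputable def lamGen (p q : ℕ) : Fin 3 → ℝ := ![(1 : ℝ)/q, -(1 : ℝ)/q, (p : ℝ)/q]

lemma Lam_eq_sup_zmultiples (p q : ℕ) : Lam p q = ZL3 ⊔ AddSubgroup.zmultiples (lamGen p q) := by
  rw [AddSubgroup.zmultiples_eq_closure]; rfl

lemma zsmul_lamGen (p q : ℕ) (k : ℤ) :
    k • lamGen p q = ![(k : ℝ) / q, -k / q, k * p / q] := by
  simp only [lamGen, Matrix.smul_vec3, zsmul_eq_mul]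
  exact Matrix.vec3_eq (by ring) (by ring) (by ring)

lemma mem_ZL3 {x : Fin 3 → ℝ} : x ∈ ZL3 ↔ ∀ i, ∃ n : ℤ, x i = n := by
  have hrange : ZL3 = ((Int.castAddHom ℝ).compLeft (Fin 3)).range := by
    rw [ZL3, ← AddSubgroup.closure_eq ((Int.castAddHom ℝ).compLeft (Fin 3)).range]; rfl
  rw [hrange, AddMonoidHom.mem_range]
  constructor
  · rintro ⟨z, rfl⟩ i
    exact ⟨z i, rfl⟩
  · intro h
    choose z hz using h
    exact ⟨z, funext fun i => (hz i).symm⟩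

lemma mem_Lam {p q : ℕ} {x : Fin 3 → ℝ} : x ∈ Lam p q ↔ ∃ k : ℤ, x - k • lamGen p q ∈ ZL3 := by
  simp only [Lam_eq_sup_zmultiples, AddSubgroup.mem_sup, AddSubgroup.mem_zmultiples_iff]
  constructor
  · rintro ⟨y, hy, _, ⟨k, rfl⟩, rfl⟩
    exact ⟨k, by simpa using hy⟩
  · rintro ⟨k, hk⟩
    exact ⟨_, hk, _, ⟨k, rfl⟩, sub_add_cancel x _⟩

lemma intVec_mem_ZL3 (a b c : ℤ) : ![(a : ℝ), b, c] ∈ ZL3 :=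
  mem_ZL3.mpr fun i => by fin_cases i; exacts [⟨a, rfl⟩, ⟨b, rfl⟩, ⟨c, rfl⟩]

lemma zsmul_lamGen_mem_ZL3 {p q : ℕ} (hq : q ≠ 0) {k : ℤ} (hk : (q : ℤ) ∣ k) :
    k • lamGen p q ∈ ZL3 := by
  obtain ⟨t, rfl⟩ := hk
  have hq : (q : ℝ) ≠ 0 := by exact_mod_cast hq
  convert intVec_mem_ZL3 t (-t) (t * p) using 1
  rw [zsmul_lamGen]
  push_cast
  exact Matrix.vec3_eq (by field_simp) (by field_simp) (by field_simp)

lemma mem_ZL3_of_mem_Lam_of_int_coord_zero {p q : ℕ} (hq : q ≠ 0) {x : Fin 3 → ℝ}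
    (hx : x ∈ Lam p q) (hint : ∃ n : ℤ, x 0 = n) : x ∈ ZL3 := by
  obtain ⟨k, hk⟩ := mem_Lam.mp hx
  suffices hdvd : (q : ℤ) ∣ k by
    simpa using add_mem hk (zsmul_lamGen_mem_ZL3 (p := p) hq hdvd)
  obtain ⟨n, hn⟩ := hint
  obtain ⟨m, hm⟩ := mem_ZL3.mp hk 0
  have hq : (q : ℝ) ≠ 0 := by exact_mod_cast hq
  simp only [zsmul_lamGen, Pi.sub_apply, Matrix.cons_val_zero, hn] at hm
  field_simp at hm
  exact ⟨n - m, by exact_mod_cast (by linarith : (k : ℝ) = q * (n - m))⟩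

lemma mem_ZL3_of_mem_Lam_of_int_coord_two {p q : ℕ} (hq : q ≠ 0) (hcop : Nat.Coprime p q)
    {x : Fin 3 → ℝ} (hx : x ∈ Lam p q) (hint : ∃ n : ℤ, x 2 = n) : x ∈ ZL3 := by
  obtain ⟨k, hk⟩ := mem_Lam.mp hx
  suffices hdvd : (q : ℤ) ∣ k by
    simpa using add_mem hk (zsmul_lamGen_mem_ZL3 (p := p) hq hdvd)
  obtain ⟨n, hn⟩ := hint
  obtain ⟨m, hm⟩ := mem_ZL3.mp hk 2
  have hq : (q : ℝ) ≠ 0 := by exact_mod_cast hq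
  simp only [zsmul_lamGen, Pi.sub_apply, Matrix.cons_val_two, Matrix.tail_cons,
    Matrix.head_cons, hn] at hm
  field_simp at hm
  have hdvd : (q : ℤ) ∣ k * p :=
    ⟨n - m, by exact_mod_cast (by linarith : (k : ℝ) * p = q * (n - m))⟩
  exact (Nat.isCoprime_iff_coprime.mpr hcop.symm).dvd_of_dvd_mul_right hdvd

lemma exists_coord_zero_add_coord_one_eq_int {p q : ℕ} {x : Fin 3 → ℝ} (hx : x ∈ Lam p q) :
    ∃ n : ℤ, x 0 + x 1 = n := by
  obtain ⟨k, hk⟩ := mem_Lam.mp hx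
  obtain ⟨m, hm⟩ := mem_ZL3.mp hk 0
  obtain ⟨m', hm'⟩ := mem_ZL3.mp hk 1
  refine ⟨m + m', ?_⟩
  simp only [Pi.sub_apply, zsmul_lamGen, Matrix.cons_val] at hm hm'
  push_cast
  linear_combination hm + hm'

noncomputable def coordZeroModOne : (Fin 3 → ℝ) →+ UnitAddCircle :=
  (QuotientAddGroup.mk' _).comp (Pi.evalAddMonoidHom (fun _ => ℝ) 0)

lemma coordZeroModOne_eq_zero_iff {x : Fin 3 → ℝ} :
    coordZeroModOne x = 0 ↔ ∃ n : ℤ, x 0 = n := by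
  change ((x 0 : ℝ) : UnitAddCircle) = 0 ↔ _
  rw [AddCircle.coe_eq_zero_iff]
  simp only [zsmul_eq_mul, mul_one, eq_comm]

lemma ker_coordZeroModOne_comp_subtype_Lam {p q : ℕ} (hq : q ≠ 0) :
    (coordZeroModOne.comp (Lam p q).subtype).ker = ZL3.addSubgroupOf (Lam p q) := by
  ext ⟨x, hx⟩
  simp only [AddMonoidHom.mem_ker, AddMonoidHom.coe_comp, Function.comp_apply,
    AddSubgroup.coe_subtype, AddSubgroup.mem_addSubgroupOf, coordZeroModOne_eq_zero_iff]
  exact ⟨mem_ZL3_of_mem_Lam_of_int_coord_zero hq hx, fun h => mem_ZL3.mp h 0⟩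

lemma range_coordZeroModOne_comp_subtype_Lam (p q : ℕ) :
    (coordZeroModOne.comp (Lam p q).subtype).range
      = AddSubgroup.zmultiples ((1 / q : ℝ) : UnitAddCircle) := by
  have hZL3 : ZL3.map coordZeroModOne = ⊥ :=
    (AddSubgroup.map_eq_bot_iff _).mpr fun x hx =>
      coordZeroModOne_eq_zero_iff.mpr (mem_ZL3.mp hx 0)
  rw [AddMonoidHom.range_comp, AddSubgroup.range_subtype, Lam_eq_sup_zmultiples,
    AddSubgroup.map_sup, hZL3, bot_sup_eq, AddMonoidHom.map_zmultiples]
  rfl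

lemma index_ZL3_addSubgroupOf_Lam {p q : ℕ} (hq : q ≠ 0) :
    (ZL3.addSubgroupOf (Lam p q)).index = q := by
  rw [← ker_coordZeroModOne_comp_subtype_Lam hq, AddSubgroup.index_ker,
    range_coordZeroModOne_comp_subtype_Lam, Nat.card_zmultiples,
    AddCircle.addOrderOf_period_div (Nat.pos_of_ne_zero hq)]

def stdTetraVertices : Set (Fin 3 → ℝ) := {![0,0,0], ![1,0,0], ![0,1,0], ![0,0,1]}

lemma convexHull_stdTetraVertices_subset : convexHull ℝ stdTetraVertices ⊆
    {x | 0 ≤ x 0 ∧ 0 ≤ x 1 ∧ 0 ≤ x 2 ∧ x 0 + x 1 + x 2 ≤ 1} := by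
  refine convexHull_min ?_ ?_
  · rintro x (rfl | rfl | rfl | rfl) <;> norm_num [Matrix.cons_val_two]
  · rintro x ⟨hx0, hx1, hx2, hx⟩ y ⟨hy0, hy1, hy2, hy⟩ a b ha hb hab
    refine ⟨?_, ?_, ?_, ?_⟩ <;> simp only [Pi.add_apply, Pi.smul_apply, smul_eq_mul]
    · positivity
    · positivity
    · positivity
    · nlinarith

lemma mem_stdTetraVertices_of_mem_ZL3 {x : Fin 3 → ℝ} (hx : x ∈ ZL3) (h0 : 0 ≤ x 0)
    (h1 : 0 ≤ x 1) (h2 : 0 ≤ x 2) (hsum : x 0 + x 1 + x 2 ≤ 1) : x ∈ stdTetraVertices := by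
  choose z hz using mem_ZL3.mp hx
  have hx : x = ![(z 0 : ℝ), z 1, z 2] := by ext i; fin_cases i <;> simp [hz]
  simp only [hz] at h0 h1 h2 hsum
  norm_cast at h0 h1 h2 hsum
  have hcases : (z 0 = 0 ∧ z 1 = 0 ∧ z 2 = 0) ∨ (z 0 = 1 ∧ z 1 = 0 ∧ z 2 = 0) ∨
      (z 0 = 0 ∧ z 1 = 1 ∧ z 2 = 0) ∨ (z 0 = 0 ∧ z 1 = 0 ∧ z 2 = 1) := by omega
  simp only [stdTetraVertices, Set.mem_insert_iff, Set.mem_singleton_iff, hx]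
  rcases hcases with ⟨e0, e1, e2⟩ | ⟨e0, e1, e2⟩ | ⟨e0, e1, e2⟩ | ⟨e0, e1, e2⟩ <;> simp [e0, e1, e2]

lemma mem_stdTetraVertices_of_mem_Lam {p q : ℕ} (hq : q ≠ 0) (hcop : Nat.Coprime p q)
    {x : Fin 3 → ℝ} (hx : x ∈ Lam p q) (hT : x ∈ convexHull ℝ stdTetraVertices) :
    x ∈ stdTetraVertices := by
  obtain ⟨h0, h1, h2, hsum⟩ := convexHull_stdTetraVertices_subset hT
  obtain ⟨n, hn⟩ := exists_coord_zero_add_coord_one_eq_int hx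
  have hn01 : n = 0 ∨ n = 1 := by
    have : (0 : ℝ) ≤ n ∧ (n : ℝ) ≤ 1 := ⟨by linarith, by linarith⟩
    have : 0 ≤ n ∧ n ≤ 1 := by exact_mod_cast this
    omega
  have hZ : x ∈ ZL3 := by
    rcases hn01 with rfl | rfl <;> push_cast at hn
    · exact mem_ZL3_of_mem_Lam_of_int_coord_zero hq hx ⟨0, by rw [Int.cast_zero]; linarith⟩
    · exact mem_ZL3_of_mem_Lam_of_int_coord_two hq hcop hx ⟨0, by rw [Int.cast_zero]; linarith⟩
  exact mem_stdTetraVertices_of_mem_ZL3 hZ h0 h1 h2 hsum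

noncomputable def lamEquiv (p q : ℕ) (hq : q ≠ 0) : (Fin 3 → ℝ) ≃ₗ[ℝ] (Fin 3 → ℝ) where
  toFun x := ![p * x 1 + x 2, q * x 1, x 0 + x 1]
  invFun y := ![y 2 - y 1 / q, y 1 / q, y 0 - p * y 1 / q]
  map_add' a b := by
    simp only [Matrix.vec3_add, Pi.add_apply]
    ring_nf
  map_smul' c a := by
    simp only [Matrix.smul_vec3, Pi.smul_apply, smul_eq_mul, RingHom.id_apply]
    ring_nf
  left_inv x := by
    have hq : (q : ℝ) ≠ 0 := by exact_mod_cast hq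
    ext i
    fin_cases i <;> simp only [Fin.zero_eta, Fin.mk_one, Fin.reduceFinMk, Matrix.cons_val] <;>
      field_simp <;> ring
  right_inv y := by
    have hq : (q : ℝ) ≠ 0 := by exact_mod_cast hq
    ext i
    fin_cases i <;> simp only [Fin.zero_eta, Fin.mk_one, Fin.reduceFinMk, Matrix.cons_val] <;>
      field_simp <;> ring

lemma lamEquiv_apply {p q : ℕ} (hq : q ≠ 0) (x : Fin 3 → ℝ) :
    lamEquiv p q hq x = ![p * x 1 + x 2, q * x 1, x 0 + x 1] := rfl

lemma lamEquiv_symm_apply {p q : ℕ} (hq : q ≠ 0) (y : Fin 3 → ℝ) :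
    (lamEquiv p q hq).symm y = ![y 2 - y 1 / q, y 1 / q, y 0 - p * y 1 / q] := rfl

lemma lamEquiv_apply_mem_ZL3 {p q : ℕ} (hq : q ≠ 0) {x : Fin 3 → ℝ} (hx : x ∈ Lam p q) :
    lamEquiv p q hq x ∈ ZL3 := by
  obtain ⟨k, hk⟩ := mem_Lam.mp hx
  have hgen : lamEquiv p q hq (lamGen p q) = ![0, -1, 0] := by
    have hq : (q : ℝ) ≠ 0 := by exact_mod_cast hq
    rw [lamEquiv_apply]
    simp only [lamGen, Matrix.cons_val]
    exact Matrix.vec3_eq (by ring) (by field_simp) (by ring)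
  have hint : ∀ z ∈ ZL3, lamEquiv p q hq z ∈ ZL3 := fun z hz => by
    choose m hm using mem_ZL3.mp hz
    convert intVec_mem_ZL3 (p * m 1 + m 2) (q * m 1) (m 0 + m 1) using 1
    rw [lamEquiv_apply, hm 0, hm 1, hm 2]
    push_cast
    rfl
  rw [← sub_add_cancel x (k • lamGen p q), map_add, map_zsmul, hgen]
  exact add_mem (hint _ hk) (zsmul_mem (by simpa using intVec_mem_ZL3 0 (-1) 0) k)

lemma lamEquiv_symm_apply_mem_Lam {p q : ℕ} (hq : q ≠ 0) {y : Fin 3 → ℝ} (hy : y ∈ ZL3) :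
    (lamEquiv p q hq).symm y ∈ Lam p q := by
  choose m hm using mem_ZL3.mp hy
  have hq : (q : ℝ) ≠ 0 := by exact_mod_cast hq
  refine mem_Lam.mpr ⟨-m 1, ?_⟩
  convert intVec_mem_ZL3 (m 2) 0 (m 0) using 1
  rw [lamEquiv_symm_apply, zsmul_lamGen, hm 0, hm 1, hm 2]
  simp only [Matrix.cons_sub_cons, Matrix.empty_sub_empty]
  push_cast
  exact Matrix.vec3_eq (by ring) (by ring) (by field_simp; ring)

lemma lamEquiv_image_Lam {p q : ℕ} (hq : q ≠ 0) :
    lamEquiv p q hq '' (Lam p q : Set (Fin 3 → ℝ)) = ZL3 := by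
  rw [LinearEquiv.image_eq_preimage_symm]
  ext y
  refine ⟨fun hy => ?_, lamEquiv_symm_apply_mem_Lam hq⟩
  simpa using lamEquiv_apply_mem_ZL3 hq hy

lemma lamEquiv_image_stdTetraVertices {p q : ℕ} (hq : q ≠ 0) :
    lamEquiv p q hq '' stdTetraVertices =
      {![0,0,0], ![1,0,0], ![0,0,1], ![(p : ℝ), (q : ℝ), 1]} := by
  have h₀ : lamEquiv p q hq ![0,0,0] = ![0,0,0] := by simp [lamEquiv_apply]
  have h₁ : lamEquiv p q hq ![1,0,0] = ![0,0,1] := by simp [lamEquiv_apply]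
  have h₂ : lamEquiv p q hq ![0,1,0] = ![(p : ℝ), (q : ℝ), 1] := by simp [lamEquiv_apply]
  have h₃ : lamEquiv p q hq ![0,0,1] = ![1,0,0] := by simp [lamEquiv_apply]
  simp only [stdTetraVertices, Set.image_insert_eq, Set.image_singleton, h₀, h₁, h₂, h₃]
  ext y
  simp only [Set.mem_insert_iff, Set.mem_singleton_iff]
  tauto

theorem Lam_change_of_coordinates_general (p q : ℕ) (hpq : p ≤ q)
    (hgcd : Nat.gcd p q = 1) :
    ZL3 ≤ Lam p q ∧
    (ZL3.addSubgroupOf (Lam p q)).index = q ∧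
    (∀ x ∈ Lam p q, x ∈ convexHull ℝ
        ({![0,0,0], ![1,0,0], ![0,1,0], ![0,0,1]} : Set (Fin 3 → ℝ)) →
      x ∈ ({![0,0,0], ![1,0,0], ![0,1,0], ![0,0,1]} : Set (Fin 3 → ℝ))) ∧
    (∃ φ : (Fin 3 → ℝ) ≃ᵃ[ℝ] (Fin 3 → ℝ),
      φ '' (Lam p q : Set (Fin 3 → ℝ)) = (ZL3 : Set (Fin 3 → ℝ)) ∧
      φ '' ({![0,0,0], ![1,0,0], ![0,1,0], ![0,0,1]} : Set (Fin 3 → ℝ))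
        = ({![0,0,0], ![1,0,0], ![0,0,1], ![(p : ℝ), (q : ℝ), 1]} : Set (Fin 3 → ℝ))) := by
  have hq : q ≠ 0 := by
    rintro rfl
    simp_all
  exact ⟨le_sup_left, index_ZL3_addSubgroupOf_Lam hq,
    fun x hx hT => mem_stdTetraVertices_of_mem_Lam hq hgcd hx hT,
    (lamEquiv p q hq).toAffineEquiv, lamEquiv_image_Lam hq, lamEquiv_image_stdTetraVertices hq⟩

/-- For 1 ≤ p ≤ q with gcd(p,q)=1: Λ(p,q) contains ℤ³ with index q, the standard
tetrahedron T₀ contains no points of Λ(p,q) other than its vertices, and some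
affine isomorphism of ℝ³ maps Λ(p,q) onto ℤ³ sending T₀ to T(p,q). -/
theorem Lam_change_of_coordinates (p q : ℕ) (hp : 1 ≤ p) (hpq : p ≤ q)
    (hgcd : Nat.gcd p q = 1) :
    ZL3 ≤ Lam p q ∧
    (ZL3.addSubgroupOf (Lam p q)).index = q ∧
    (∀ x ∈ Lam p q, x ∈ convexHull ℝ
        ({![0,0,0], ![1,0,0], ![0,1,0], ![0,0,1]} : Set (Fin 3 → ℝ)) →
      x ∈ ({![0,0,0], ![1,0,0], ![0,1,0], ![0,0,1]} : Set (Fin 3 → ℝ))) ∧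
    (∃ φ : (Fin 3 → ℝ) ≃ᵃ[ℝ] (Fin 3 → ℝ),
      φ '' (Lam p q : Set (Fin 3 → ℝ)) = (ZL3 : Set (Fin 3 → ℝ)) ∧
      φ '' ({![0,0,0], ![1,0,0], ![0,1,0], ![0,0,1]} : Set (Fin 3 → ℝ))
        = ({![0,0,0], ![1,0,0], ![0,0,1], ![(p : ℝ), (q : ℝ), 1]} : Set (Fin 3 → ℝ))) :=
  Lam_change_of_coordinates_general p q hpq hgcd
end

section
/- The lattice 3-polytope conv{(0,0,0), (1,0,0), (0,1,0), (−1,−1,0), (1,2,3)} contains exactly 5 lattice points, has volume vector (−9,3,3,3,0) (i.e., its five lattice points satisfy the affine dependence 3·(1,0,0) + 3·(0,1,0) + 3·(−1,−1,0) − 9·(0,0,0) = 0), and has lattice width 2. -/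
/-- `A` has width at most `w` with respect to the functional `f`. -/
def widthLE (A : Set (Fin 3 → ℤ)) (f : Fin 3 → ℤ) (w : ℤ) : Prop :=
  ∃ c : ℤ, ∀ p ∈ A, c ≤ dotZ f p ∧ dotZ f p ≤ c + w

/-- The polytope as intersection of half-spaces. -/
def Shalf : Set (Fin 3 → ℝ) :=
  {x | 0 ≤ x 2 ∧ 3 * x 0 + 3 * x 1 - 2 * x 2 ≤ 3 ∧
       -6 * x 0 + 3 * x 1 + x 2 ≤ 3 ∧ 3 * x 0 - 6 * x 1 + 4 * x 2 ≤ 3}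

lemma Shalf_convex : Convex ℝ Shalf := by
  intro x hx y hy a b ha hb hab
  obtain ⟨h1, h2, h3, h4⟩ := hx
  obtain ⟨g1, g2, g3, g4⟩ := hy
  refine ⟨?_, ?_, ?_, ?_⟩ <;>
    simp only [Pi.add_apply, Pi.smul_apply, smul_eq_mul] <;>
    nlinarith [mul_nonneg ha h1, mul_nonneg hb g1,
      mul_le_mul_of_nonneg_left h2 ha, mul_le_mul_of_nonneg_left g2 hb,
      mul_le_mul_of_nonneg_left h3 ha, mul_le_mul_of_nonneg_left g3 hb,
      mul_le_mul_of_nonneg_left h4 ha, mul_le_mul_of_nonneg_left g4 hb]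

/-- conv{(0,0,0),(1,0,0),(0,1,0),(−1,−1,0),(1,2,3)} contains exactly 5 lattice
points, its lattice points satisfy the affine dependence
3·(1,0,0)+3·(0,1,0)+3·(−1,−1,0)−9·(0,0,0) = 0 (volume vector (−9,3,3,3,0)),
and it has lattice width 2. -/
theorem polytope_31_width_two :
    letI V : Set (Fin 3 → ℤ) := {![0,0,0], ![1,0,0], ![0,1,0], ![-1,-1,0], ![1,2,3]}
    ({z : Fin 3 → ℤ | toR z ∈ convexHull ℝ (toR '' V)} = V) ∧
    ((3 : ℤ) • ![1,0,0] + (3 : ℤ) • ![0,1,0] + (3 : ℤ) • ![-1,-1,0]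
        - (9 : ℤ) • ![0,0,0] = (0 : Fin 3 → ℤ)) ∧
    (∃ f : Fin 3 → ℤ, f ≠ 0 ∧ widthLE V f 2) ∧
    (∀ f : Fin 3 → ℤ, f ≠ 0 → ¬ widthLE V f 1) := by
  set V : Set (Fin 3 → ℤ) := {![0,0,0], ![1,0,0], ![0,1,0], ![-1,-1,0], ![1,2,3]} with hVdef
  have hVmem : ∀ p : Fin 3 → ℤ, p ∈ V ↔
      p = ![0,0,0] ∨ p = ![1,0,0] ∨ p = ![0,1,0] ∨ p = ![-1,-1,0] ∨ p = ![1,2,3] := by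
    intro p
    simp [V, Set.mem_insert_iff, Set.mem_singleton_iff]
  refine ⟨?_, ?_, ?_, ?_⟩
  · -- lattice points
    apply Set.eq_of_subset_of_subset
    · intro z hz
      have hsub : toR '' V ⊆ Shalf := by
        rintro x ⟨p, hp, rfl⟩
        rcases (hVmem p).1 hp with rfl | rfl | rfl | rfl | rfl <;>
          simp [Shalf, toR] <;> norm_num
      have hx : toR z ∈ Shalf := convexHull_min hsub Shalf_convex hz
      obtain ⟨h1, h2, h3, h4⟩ := hx
      simp only [toR] at h1 h2 h3 h4
      have i1 : (0 : ℤ) ≤ z 2 := by exact_mod_cast h1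
      have i2 : 3 * z 0 + 3 * z 1 - 2 * z 2 ≤ 3 := by exact_mod_cast h2
      have i3 : -6 * z 0 + 3 * z 1 + z 2 ≤ 3 := by exact_mod_cast h3
      have i4 : 3 * z 0 - 6 * z 1 + 4 * z 2 ≤ 3 := by exact_mod_cast h4
      have hcase : (z 0 = 0 ∧ z 1 = 0 ∧ z 2 = 0) ∨ (z 0 = 1 ∧ z 1 = 0 ∧ z 2 = 0) ∨
          (z 0 = 0 ∧ z 1 = 1 ∧ z 2 = 0) ∨ (z 0 = -1 ∧ z 1 = -1 ∧ z 2 = 0) ∨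
          (z 0 = 1 ∧ z 1 = 2 ∧ z 2 = 3) := by
        have hz2 : z 2 = 0 ∨ z 2 = 1 ∨ z 2 = 2 ∨ z 2 = 3 := by omega
        rcases hz2 with h | h | h | h <;> omega
      rw [hVmem]
      rcases hcase with ⟨a, b, c⟩ | ⟨a, b, c⟩ | ⟨a, b, c⟩ | ⟨a, b, c⟩ | ⟨a, b, c⟩
      · exact Or.inl (by funext i; fin_cases i <;> simp [a, b, c])
      · exact Or.inr (Or.inl (by funext i; fin_cases i <;> simp [a, b, c]))
      · exact Or.inr (Or.inr (Or.inl (by funext i; fin_cases i <;> simp [a, b, c])))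
      · exact Or.inr (Or.inr (Or.inr (Or.inl (by funext i; fin_cases i <;> simp [a, b, c]))))
      · exact Or.inr (Or.inr (Or.inr (Or.inr (by funext i; fin_cases i <;> simp [a, b, c]))))
    · intro p hp
      exact subset_convexHull ℝ (toR '' V) ⟨p, hp, rfl⟩
  · -- affine dependence
    funext i
    fin_cases i <;> simp
  · -- width ≤ 2
    refine ⟨![1, 0, 0], ?_, -1, ?_⟩
    · intro h
      have := congrFun h 0
      simp at this
    · intro p hp
      rcases (hVmem p).1 hp with rfl | rfl | rfl | rfl | rfl <;>
        simp [dotZ, Fin.sum_univ_three]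
  · -- width > 1
    rintro f hf ⟨c, hc⟩
    have h0 := hc ![0,0,0] (by rw [hVmem]; tauto)
    have h1 := hc ![1,0,0] (by rw [hVmem]; tauto)
    have h2 := hc ![0,1,0] (by rw [hVmem]; tauto)
    have h3 := hc ![-1,-1,0] (by rw [hVmem]; tauto)
    have h4 := hc ![1,2,3] (by rw [hVmem]; tauto)
    simp only [dotZ, Fin.sum_univ_three, Matrix.cons_val_zero, Matrix.cons_val_one,
      Matrix.head_cons, Matrix.cons_val_two, Matrix.tail_cons] at h0 h1 h2 h3 h4
    have hne : ¬(f 0 = 0 ∧ f 1 = 0 ∧ f 2 = 0) := by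
      rintro ⟨a, b, d⟩
      exact hf (by funext i; fin_cases i <;> simp [a, b, d])
    omega
end

section
/- The polytope P = conv{(0,0,0), (1,0,0), (0,0,1), (1,1,1), (−2,−1,−2)} contains exactly 5 lattice points, (0,0,0) = ((1,0,0)+(0,0,1)+(1,1,1)+(−2,−1,−2))/4 is the barycenter of the other four points, each of the four tetrahedra formed by (0,0,0) replaced into the facets is empty of additional lattice points, and P has lattice width 2 (witnessed by the functional x − z). -/
lemma lin_hull (a0 a1 a2 b : ℤ) {S : Set (Fin 3 → ℤ)}
    {z : Fin 3 → ℤ} (hz : toR z ∈ convexHull ℝ (toR '' S))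
    (h : ∀ v ∈ S, a0 * v 0 + a1 * v 1 + a2 * v 2 ≤ b) :
    a0 * z 0 + a1 * z 1 + a2 * z 2 ≤ b := by
  set f : (Fin 3 → ℝ) →ₗ[ℝ] ℝ :=
    (a0 : ℝ) • LinearMap.proj 0 + (a1 : ℝ) • LinearMap.proj 1 +
      (a2 : ℝ) • LinearMap.proj 2 with hfdef
  have hf : ∀ x : Fin 3 → ℝ, f x = (a0 : ℝ) * x 0 + (a1 : ℝ) * x 1 + (a2 : ℝ) * x 2 := by
    intro x; simp [hfdef, smul_eq_mul]
  have hsub : toR '' S ⊆ {x | f x ≤ (b : ℝ)} := by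
    rintro x ⟨v, hv, rfl⟩
    have hv' := h v hv
    simp only [Set.mem_setOf_eq, hf, toR]
    exact_mod_cast hv'
  have hmem := convexHull_min hsub (convex_halfSpace_le f.isLinear (b : ℝ)) hz
  have : (a0 : ℝ) * (z 0 : ℝ) + (a1 : ℝ) * (z 1 : ℝ) + (a2 : ℝ) * (z 2 : ℝ) ≤ (b : ℝ) := by
    simpa [hf, toR] using hmem
  exact_mod_cast this

lemma vec_eq (z : Fin 3 → ℤ) {a b c : ℤ} (h0 : z 0 = a) (h1 : z 1 = b) (h2 : z 2 = c) :
    z = ![a, b, c] := by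
  funext i; fin_cases i <;> simp [h0, h1, h2]

lemma not_mem_single {x y : Fin 3 → ℤ} (h : x ≠ y) : x ∉ ({y} : Set (Fin 3 → ℤ)) :=
  fun hx => h hx

/-- P = conv{(0,0,0),(1,0,0),(0,0,1),(1,1,1),(−2,−1,−2)} contains exactly 5
lattice points, (0,0,0) is the barycenter of the other four, the four tetrahedra
obtained by replacing a vertex by (0,0,0) are empty, and P has lattice width 2
(witnessed by x − z). -/
theorem symmetric_41_volume_four :
    letI w : Fin 4 → Fin 3 → ℤ := ![![1,0,0], ![0,0,1], ![1,1,1], ![-2,-1,-2]]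
    letI V : Set (Fin 3 → ℤ) := insert ![0,0,0] (Set.range w)
    ({z : Fin 3 → ℤ | toR z ∈ convexHull ℝ (toR '' V)} = V) ∧
    ((∑ j : Fin 4, w j) = (4 : ℤ) • ![0,0,0]) ∧
    (∀ j : Fin 4, ∀ z : Fin 3 → ℤ,
      toR z ∈ convexHull ℝ (toR '' insert ![0,0,0] (Set.range w \ {w j})) →
      z ∈ insert ![0,0,0] (Set.range w \ {w j})) ∧
    (widthLE V ![1,0,-1] 2) ∧
    (∀ f : Fin 3 → ℤ, f ≠ 0 → ¬ widthLE V f 1) := by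
  refine ⟨?_, by decide, ?_, ?_, ?_⟩
  · -- exactly 5 lattice points
    ext z
    simp only [Set.mem_setOf_eq]
    constructor
    · intro hz
      have h1 := lin_hull 1 (-1) 1 1 hz
        (by rintro v (rfl | ⟨j, rfl⟩)
            exacts [by decide, by fin_cases j <;> decide])
      have h2 := lin_hull 1 (-5) 1 1 hz
        (by rintro v (rfl | ⟨j, rfl⟩)
            exacts [by decide, by fin_cases j <;> decide])
      have h3 := lin_hull 1 3 (-3) 1 hz
        (by rintro v (rfl | ⟨j, rfl⟩)
            exacts [by decide, by fin_cases j <;> decide])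
      have h4 := lin_hull (-3) 3 1 1 hz
        (by rintro v (rfl | ⟨j, rfl⟩)
            exacts [by decide, by fin_cases j <;> decide])
      have key : (z 0 = 0 ∧ z 1 = 0 ∧ z 2 = 0) ∨ (z 0 = 1 ∧ z 1 = 0 ∧ z 2 = 0) ∨
          (z 0 = 0 ∧ z 1 = 0 ∧ z 2 = 1) ∨ (z 0 = 1 ∧ z 1 = 1 ∧ z 2 = 1) ∨
          (z 0 = -2 ∧ z 1 = -1 ∧ z 2 = -2) := by omega
      rcases key with ⟨e0, e1, e2⟩ | ⟨e0, e1, e2⟩ | ⟨e0, e1, e2⟩ | ⟨e0, e1, e2⟩ | ⟨e0, e1, e2⟩ <;>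
        rw [vec_eq z e0 e1 e2]
      · exact Set.mem_insert _ _
      · exact Set.mem_insert_iff.mpr (Or.inr ⟨0, rfl⟩)
      · exact Set.mem_insert_iff.mpr (Or.inr ⟨1, rfl⟩)
      · exact Set.mem_insert_iff.mpr (Or.inr ⟨2, rfl⟩)
      · exact Set.mem_insert_iff.mpr (Or.inr ⟨3, rfl⟩)
    · intro hv
      exact subset_convexHull ℝ _ ⟨z, hv, rfl⟩
  · -- the four sub-tetrahedra are empty
    intro j z hz
    fin_cases j
    · have h1 := lin_hull 1 (-1) 0 0 hz
        (by rintro v (rfl | ⟨⟨k, rfl⟩, hk⟩)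
            exacts [by decide, by
              fin_cases k
              exacts [absurd rfl hk, by decide, by decide, by decide]])
      have h2 := lin_hull 1 (-2) 0 0 hz
        (by rintro v (rfl | ⟨⟨k, rfl⟩, hk⟩)
            exacts [by decide, by
              fin_cases k
              exacts [absurd rfl hk, by decide, by decide, by decide]])
      have h3 := lin_hull 1 0 (-1) 0 hz
        (by rintro v (rfl | ⟨⟨k, rfl⟩, hk⟩)
            exacts [by decide, by
              fin_cases k
              exacts [absurd rfl hk, by decide, by decide, by decide]])
      have h4 := lin_hull (-3) 3 1 1 hz
        (by rintro v (rfl | ⟨⟨k, rfl⟩, hk⟩)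
            exacts [by decide, by
              fin_cases k
              exacts [absurd rfl hk, by decide, by decide, by decide]])
      have key : (z 0 = 0 ∧ z 1 = 0 ∧ z 2 = 0) ∨ (z 0 = 0 ∧ z 1 = 0 ∧ z 2 = 1) ∨
          (z 0 = 1 ∧ z 1 = 1 ∧ z 2 = 1) ∨ (z 0 = -2 ∧ z 1 = -1 ∧ z 2 = -2) := by omega
      rcases key with ⟨e0, e1, e2⟩ | ⟨e0, e1, e2⟩ | ⟨e0, e1, e2⟩ | ⟨e0, e1, e2⟩ <;>
        rw [vec_eq z e0 e1 e2]
      · exact Set.mem_insert _ _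
      · exact Set.mem_insert_iff.mpr (Or.inr ⟨⟨1, rfl⟩, not_mem_single (by decide)⟩)
      · exact Set.mem_insert_iff.mpr (Or.inr ⟨⟨2, rfl⟩, not_mem_single (by decide)⟩)
      · exact Set.mem_insert_iff.mpr (Or.inr ⟨⟨3, rfl⟩, not_mem_single (by decide)⟩)
    · have h1 := lin_hull 0 (-1) 1 0 hz
        (by rintro v (rfl | ⟨⟨k, rfl⟩, hk⟩)
            exacts [by decide, by
              fin_cases k
              exacts [by decide, absurd rfl hk, by decide, by decide]])
      have h2 := lin_hull 0 (-2) 1 0 hz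
        (by rintro v (rfl | ⟨⟨k, rfl⟩, hk⟩)
            exacts [by decide, by
              fin_cases k
              exacts [by decide, absurd rfl hk, by decide, by decide]])
      have h3 := lin_hull (-1) 0 1 0 hz
        (by rintro v (rfl | ⟨⟨k, rfl⟩, hk⟩)
            exacts [by decide, by
              fin_cases k
              exacts [by decide, absurd rfl hk, by decide, by decide]])
      have h4 := lin_hull 1 3 (-3) 1 hz
        (by rintro v (rfl | ⟨⟨k, rfl⟩, hk⟩)
            exacts [by decide, by
              fin_cases k
              exacts [by decide, absurd rfl hk, by decide, by decide]])
      have key : (z 0 = 0 ∧ z 1 = 0 ∧ z 2 = 0) ∨ (z 0 = 1 ∧ z 1 = 0 ∧ z 2 = 0) ∨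
          (z 0 = 1 ∧ z 1 = 1 ∧ z 2 = 1) ∨ (z 0 = -2 ∧ z 1 = -1 ∧ z 2 = -2) := by omega
      rcases key with ⟨e0, e1, e2⟩ | ⟨e0, e1, e2⟩ | ⟨e0, e1, e2⟩ | ⟨e0, e1, e2⟩ <;>
        rw [vec_eq z e0 e1 e2]
      · exact Set.mem_insert _ _
      · exact Set.mem_insert_iff.mpr (Or.inr ⟨⟨0, rfl⟩, not_mem_single (by decide)⟩)
      · exact Set.mem_insert_iff.mpr (Or.inr ⟨⟨2, rfl⟩, not_mem_single (by decide)⟩)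
      · exact Set.mem_insert_iff.mpr (Or.inr ⟨⟨3, rfl⟩, not_mem_single (by decide)⟩)
    · have h1 := lin_hull 0 1 0 0 hz
        (by rintro v (rfl | ⟨⟨k, rfl⟩, hk⟩)
            exacts [by decide, by
              fin_cases k
              exacts [by decide, by decide, absurd rfl hk, by decide]])
      have h2 := lin_hull 0 2 (-1) 0 hz
        (by rintro v (rfl | ⟨⟨k, rfl⟩, hk⟩)
            exacts [by decide, by
              fin_cases k
              exacts [by decide, by decide, absurd rfl hk, by decide]])
      have h3 := lin_hull (-1) 2 0 0 hz
        (by rintro v (rfl | ⟨⟨k, rfl⟩, hk⟩)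
            exacts [by decide, by
              fin_cases k
              exacts [by decide, by decide, absurd rfl hk, by decide]])
      have h4 := lin_hull 1 (-5) 1 1 hz
        (by rintro v (rfl | ⟨⟨k, rfl⟩, hk⟩)
            exacts [by decide, by
              fin_cases k
              exacts [by decide, by decide, absurd rfl hk, by decide]])
      have key : (z 0 = 0 ∧ z 1 = 0 ∧ z 2 = 0) ∨ (z 0 = 1 ∧ z 1 = 0 ∧ z 2 = 0) ∨
          (z 0 = 0 ∧ z 1 = 0 ∧ z 2 = 1) ∨ (z 0 = -2 ∧ z 1 = -1 ∧ z 2 = -2) := by omega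
      rcases key with ⟨e0, e1, e2⟩ | ⟨e0, e1, e2⟩ | ⟨e0, e1, e2⟩ | ⟨e0, e1, e2⟩ <;>
        rw [vec_eq z e0 e1 e2]
      · exact Set.mem_insert _ _
      · exact Set.mem_insert_iff.mpr (Or.inr ⟨⟨0, rfl⟩, not_mem_single (by decide)⟩)
      · exact Set.mem_insert_iff.mpr (Or.inr ⟨⟨1, rfl⟩, not_mem_single (by decide)⟩)
      · exact Set.mem_insert_iff.mpr (Or.inr ⟨⟨3, rfl⟩, not_mem_single (by decide)⟩)
    · have h1 := lin_hull 0 (-1) 0 0 hz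
        (by rintro v (rfl | ⟨⟨k, rfl⟩, hk⟩)
            exacts [by decide, by
              fin_cases k
              exacts [by decide, by decide, by decide, absurd rfl hk]])
      have h2 := lin_hull 0 1 (-1) 0 hz
        (by rintro v (rfl | ⟨⟨k, rfl⟩, hk⟩)
            exacts [by decide, by
              fin_cases k
              exacts [by decide, by decide, by decide, absurd rfl hk]])
      have h3 := lin_hull (-1) 1 0 0 hz
        (by rintro v (rfl | ⟨⟨k, rfl⟩, hk⟩)
            exacts [by decide, by
              fin_cases k
              exacts [by decide, by decide, by decide, absurd rfl hk]])
      have h4 := lin_hull 1 (-1) 1 1 hz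
        (by rintro v (rfl | ⟨⟨k, rfl⟩, hk⟩)
            exacts [by decide, by
              fin_cases k
              exacts [by decide, by decide, by decide, absurd rfl hk]])
      have key : (z 0 = 0 ∧ z 1 = 0 ∧ z 2 = 0) ∨ (z 0 = 1 ∧ z 1 = 0 ∧ z 2 = 0) ∨
          (z 0 = 0 ∧ z 1 = 0 ∧ z 2 = 1) ∨ (z 0 = 1 ∧ z 1 = 1 ∧ z 2 = 1) := by omega
      rcases key with ⟨e0, e1, e2⟩ | ⟨e0, e1, e2⟩ | ⟨e0, e1, e2⟩ | ⟨e0, e1, e2⟩ <;>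
        rw [vec_eq z e0 e1 e2]
      · exact Set.mem_insert _ _
      · exact Set.mem_insert_iff.mpr (Or.inr ⟨⟨0, rfl⟩, not_mem_single (by decide)⟩)
      · exact Set.mem_insert_iff.mpr (Or.inr ⟨⟨1, rfl⟩, not_mem_single (by decide)⟩)
      · exact Set.mem_insert_iff.mpr (Or.inr ⟨⟨2, rfl⟩, not_mem_single (by decide)⟩)
  · -- width at most 2 via x - z
    refine ⟨-1, ?_⟩
    rintro p (rfl | ⟨j, rfl⟩)
    · decide
    · fin_cases j <;> decide
  · -- no functional has width 1
    rintro f hf ⟨c, hc⟩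
    have h0 := hc ![0,0,0] (Set.mem_insert _ _)
    have h1 := hc ![1,0,0] (Set.mem_insert_iff.mpr (Or.inr ⟨0, rfl⟩))
    have h2 := hc ![0,0,1] (Set.mem_insert_iff.mpr (Or.inr ⟨1, rfl⟩))
    have h3 := hc ![1,1,1] (Set.mem_insert_iff.mpr (Or.inr ⟨2, rfl⟩))
    have h4 := hc ![(-2),(-1),(-2)] (Set.mem_insert_iff.mpr (Or.inr ⟨3, rfl⟩))
    simp [dotZ, Fin.sum_univ_three] at h0 h1 h2 h3 h4
    obtain ⟨e0, e1, e2⟩ : f 0 = 0 ∧ f 1 = 0 ∧ f 2 = 0 := by omega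
    apply hf
    funext i
    fin_cases i
    exacts [e0, e1, e2]
end

section
/- Let q ≥ 2 and P = conv{(0,0,0), (1,0,0), (0,0,1), (p,q,1), (−p−1,−q,−2)} with 1 ≤ p ≤ q, gcd(p,q)=1, and suppose P contains no lattice points other than these five. Then q is odd and the emptiness of the tetrahedron conv{(0,0,0),(1,0,0),(0,0,1),(−p−1,−q,−2)} forces p ∈ {q−2, q−3}, while the emptiness of conv{(0,0,0),(1,0,0),(p,q,1),(−p−1,−q,−2)} forces p ∈ {2,3}; consequently q = 5 and p ∈ {2,3}. -/
open Finset

theorem Convex.sum_smul_mem_of_zero_mem {R E ι : Type*} [Field R] [LinearOrder R]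
    [IsStrictOrderedRing R] [AddCommGroup E] [Module R E]
    {s : Set E} (hs : Convex R s) (h0 : (0 : E) ∈ s) {t : Finset ι} {w : ι → R}
    {z : ι → E} (hw₀ : ∀ i ∈ t, 0 ≤ w i) (hw₁ : ∑ i ∈ t, w i ≤ 1) (hz : ∀ i ∈ t, z i ∈ s) :
    ∑ i ∈ t, w i • z i ∈ s := by
  have := hs.sum_mem (t := insertNone t) (w := fun o => o.elim (1 - ∑ i ∈ t, w i) w)
    (z := fun o => o.elim 0 z)
    (fun o ho => by cases o with
      | none => simpa using hw₁
      | some i => exact hw₀ i (mem_insertNone.1 ho i rfl))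
    (by simp [sum_insertNone])
    (fun o ho => by cases o with
      | none => exact h0
      | some i => exact hz i (mem_insertNone.1 ho i rfl))
  simpa [sum_insertNone] using this

theorem toR_mem_convexHull_of_smul_eq_sum {ι : Type*} {S : Set (Fin 3 → ℤ)} (h0 : 0 ∈ S)
    {t : Finset ι} {v : ι → Fin 3 → ℤ} (hv : ∀ i ∈ t, v i ∈ S) {n : ι → ℤ}
    (hn₀ : ∀ i ∈ t, 0 ≤ n i) {N : ℤ} (hN : ∑ i ∈ t, n i ≤ N) (hN0 : 0 < N) {z : Fin 3 → ℤ}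
    (hz : N • z = ∑ i ∈ t, n i • v i) : toR z ∈ convexHull ℝ (toR '' S) := by
  have hNR : (0 : ℝ) < N := by exact_mod_cast hN0
  have hzR : toR z = ∑ i ∈ t, ((n i : ℝ) / N) • toR (v i) := by
    funext j
    have hj : (N : ℝ) * z j = ∑ i ∈ t, (n i : ℝ) * v i j := by
      exact_mod_cast by simpa [Finset.sum_apply] using congrFun hz j
    simp only [toR, Finset.sum_apply, Pi.smul_apply, smul_eq_mul, div_mul_eq_mul_div,
      ← Finset.sum_div, ← hj]
    field_simp
  have h0R : (0 : Fin 3 → ℝ) ∈ toR '' S := ⟨0, h0, by funext; simp [toR]⟩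
  rw [hzR]
  refine (convex_convexHull ℝ _).sum_smul_mem_of_zero_mem (subset_convexHull ℝ _ h0R)
    (fun i hi => by have := hn₀ i hi; positivity) ?_
    (fun i hi => subset_convexHull ℝ _ (Set.mem_image_of_mem toR (hv i hi)))
  rw [← Finset.sum_div, div_le_one hNR]
  exact_mod_cast hN

def IsLatticeEmpty (S : Set (Fin 3 → ℤ)) : Prop :=
  ∀ z, toR z ∈ convexHull ℝ (toR '' S) → z ∈ S

theorem IsLatticeEmpty.mem_of_smul_eq_sum {S : Set (Fin 3 → ℤ)} (hS : IsLatticeEmpty S)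
    (h0 : 0 ∈ S) {ι : Type*} [Fintype ι] {v : ι → Fin 3 → ℤ} (hv : ∀ i, v i ∈ S)
    {n : ι → ℤ} (hn₀ : ∀ i, 0 ≤ n i) {N : ℤ} (hN : ∑ i, n i ≤ N) (hN0 : 0 < N)
    {z : Fin 3 → ℤ} (hz : N • z = ∑ i, n i • v i) : z ∈ S :=
  hS z (toR_mem_convexHull_of_smul_eq_sum h0 (fun i _ => hv i) (fun i _ => hn₀ i) hN hN0 hz)

def vertexSet (p q : ℤ) : Set (Fin 3 → ℤ) :=
  {![0,0,0], ![1,0,0], ![0,0,1], ![p,q,1], ![-p-1,-q,-2]}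

theorem zero_mem_vertexSet (p q : ℤ) : 0 ∈ vertexSet p q := by
  left; funext i; fin_cases i <;> rfl

theorem notMem_vertexSet {p q : ℤ} {z : Fin 3 → ℤ} (hz : z 2 = -1 ∨ (z 2 = 0 ∧ z 1 ≠ 0)) :
    z ∉ vertexSet p q := by
  rintro (rfl | rfl | rfl | rfl | rfl) <;> simp at hz

section

variable {p q : ℤ}

theorem odd_of_isLatticeEmpty (hP : IsLatticeEmpty (vertexSet p q)) (hgcd : Int.gcd p q = 1) :
    Odd q := by
  by_contra hq
  obtain ⟨m, rfl⟩ : Even q := Int.not_odd_iff_even.1 hq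
  obtain ⟨k, rfl⟩ : Odd p := by
    refine Int.not_even_iff_odd.1 fun ⟨k, hk⟩ => ?_
    have : (2 : ℤ) ∣ Int.gcd p (m + m) := Int.dvd_coe_gcd ⟨k, by omega⟩ ⟨m, by omega⟩
    rw [hgcd] at this
    norm_num at this
  refine notMem_vertexSet (z := ![-k-1, -m, -1]) (Or.inl rfl)
    (hP.mem_of_smul_eq_sum (zero_mem_vertexSet _ _) (v := ![![-(2*k+1)-1, -(m+m), -2]])
      (n := ![1]) (N := 2) ?_ ?_ ?_ (by norm_num) ?_)
  · simp [vertexSet]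
  · simp
  · simp
  · funext j; fin_cases j <;> simp <;> ring

theorem eq_two_or_three_of_isLatticeEmpty (hP : IsLatticeEmpty (vertexSet p q)) (hq : 3 ≤ q)
    (hp1 : 1 ≤ p) (hp2 : p ≤ q) : p = 2 ∨ p = 3 := by
  by_contra hp
  rcases (by omega : p = 1 ∨ 4 ≤ p) with rfl | hp4
  · refine notMem_vertexSet (z := ![0, 1, 0]) (Or.inr ⟨rfl, by simp⟩)
      (hP.mem_of_smul_eq_sum (zero_mem_vertexSet _ _) (v := ![![1,q,1], ![-1-1,-q,-2]])
        (n := ![2, 1]) (N := q) ?_ ?_ ?_ (by omega) ?_)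
    · intro i; fin_cases i <;> simp [vertexSet]
    · simp
    · simp; omega
    · funext j; fin_cases j <;> simp; ring
  · refine notMem_vertexSet (z := ![1, 1, 0]) (Or.inr ⟨rfl, by simp⟩)
      (hP.mem_of_smul_eq_sum (zero_mem_vertexSet _ _)
        (v := ![![1,0,0], ![p,q,1], ![-p-1,-q,-2]])
        (n := ![q-p+1, 2, 1]) (N := q) ?_ ?_ ?_ (by omega) ?_)
    · intro i; fin_cases i <;> simp [vertexSet]
    · simp [Fin.forall_fin_succ]; omega
    · simp [Fin.sum_univ_succ]; omega
    · funext j; fin_cases j <;> simp [Fin.sum_univ_succ] <;> ring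

theorem eq_sub_two_or_sub_three_of_isLatticeEmpty (hP : IsLatticeEmpty (vertexSet p q))
    (hq : 3 ≤ q) (hp1 : 1 ≤ p) (hp2 : p ≤ q) (hgcd : Int.gcd p q = 1) :
    p = q - 2 ∨ p = q - 3 := by
  by_contra hp
  rcases (by omega : p ≤ q - 4 ∨ p = q - 1 ∨ p = q) with hp4 | rfl | rfl
  · refine notMem_vertexSet (z := ![0, -1, 0]) (Or.inr ⟨rfl, by simp⟩)
      (hP.mem_of_smul_eq_sum (zero_mem_vertexSet _ _)
        (v := ![![1,0,0], ![0,0,1], ![-p-1,-q,-2]])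
        (n := ![p+1, 2, 1]) (N := q) ?_ ?_ ?_ (by omega) ?_)
    · intro i; fin_cases i <;> simp [vertexSet]
    · simp [Fin.forall_fin_succ]; omega
    · simp [Fin.sum_univ_succ]; omega
    · funext j; fin_cases j <;> simp [Fin.sum_univ_succ]
  · refine notMem_vertexSet (z := ![-1, -1, 0]) (Or.inr ⟨rfl, by simp⟩)
      (hP.mem_of_smul_eq_sum (zero_mem_vertexSet _ _)
        (v := ![![0,0,1], ![-(q-1)-1,-q,-2]])
        (n := ![2, 1]) (N := q) ?_ ?_ ?_ (by omega) ?_)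
    · intro i; fin_cases i <;> simp [vertexSet]
    · simp [Fin.forall_fin_succ]
    · simp; omega
    · funext j; fin_cases j <;> simp
  · rw [Int.gcd_self] at hgcd
    omega

end

/-- Classification of symmetric signature-(4,1) size-5 polytopes with q > 1:
if P = conv{(0,0,0),(1,0,0),(0,0,1),(p,q,1),(−p−1,−q,−2)} (1 ≤ p ≤ q,
gcd(p,q)=1, q ≥ 2) contains no lattice points other than these five, then q is
odd, p ∈ {q−2, q−3}, p ∈ {2, 3}, and consequently q = 5 and p ∈ {2,3}. -/
theorem symmetric_41_classification (p q : ℤ) (hq : 2 ≤ q) (hp1 : 1 ≤ p)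
    (hp2 : p ≤ q) (hgcd : Int.gcd p q = 1)
    (hempty : ∀ z : Fin 3 → ℤ,
      toR z ∈ convexHull ℝ (toR ''
        ({![0,0,0], ![1,0,0], ![0,0,1], ![p,q,1], ![-p-1,-q,-2]} : Set (Fin 3 → ℤ))) →
      z ∈ ({![0,0,0], ![1,0,0], ![0,0,1], ![p,q,1], ![-p-1,-q,-2]} : Set (Fin 3 → ℤ))) :
    Odd q ∧ (p = q - 2 ∨ p = q - 3) ∧ (p = 2 ∨ p = 3) ∧ q = 5 := by
  have hP : IsLatticeEmpty (vertexSet p q) := hempty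
  have hodd := odd_of_isLatticeEmpty hP hgcd
  have ⟨t, ht⟩ := hodd
  have hq3 : 3 ≤ q := by omega
  have hpq := eq_sub_two_or_sub_three_of_isLatticeEmpty hP hq3 hp1 hp2 hgcd
  have hp := eq_two_or_three_of_isLatticeEmpty hP hq3 hp1 hp2
  exact ⟨hodd, hpq, hp, by omega⟩
end
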